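/- arXiv:2602.02302 — 8 statements merged into one kernel-verified Lean document; each statement's English description precedes it below -/
import Mathlib

section
/- Let A and B be ω-categorical homogeneous relational structures with countably infinite domain Ω, and let C and D be first-order reducts of A and B respectively in the same relational signature τ. Then the following are equivalent: (1) there exists a bijection θ: Ω → Ω that is an isomorphism from C onto D and is a fo-bi-definition of A and B (θ and θ⁻¹ map sets first-order definable without parameters onto sets first-order definable without parameters); (2) there exist injective functions f, g: Ω → Ω such that (i) f is (A,B)-canonical, (ii) g is (B,A)-canonical, (iii) g∘f maps every Aut(A)-orbit of tuples into itself, (iv) f∘g maps every Aut(B)-orbit of tuples into itself, and for every relation symbol R ∈ τ, (v) f maps every Aut(A)-orbit contained in R^C into R^D, and (vi) g maps every Aut(B)-orbit contained in R^D into R^C. -/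
/-- The topology of pointwise convergence on functions `α → β`
(product topology with `β` discrete). -/
def FnTop (α β : Type*) : TopologicalSpace (α → β) :=
  @Pi.topologicalSpace α (fun _ => β) (fun _ => ⊥)

/-- The coordinatewise action of a permutation on tuples. -/
def tAct {Ω : Type*} (g : Equiv.Perm Ω) {n : ℕ} (u : Fin n → Ω) : Fin n → Ω :=
  fun i => g (u i)

/-- The action of a permutation on sets of tuples. -/
def sAct {Ω : Type*} (g : Equiv.Perm Ω) {n : ℕ} (c : Set (Fin n → Ω)) : Set (Fin n → Ω) :=
  tAct g '' c

/-- A set of permutations is oligomorphic if for every `n` its coordinatewise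
action on `n`-tuples has finitely many orbits. -/
def Oligo {Ω : Type*} (G : Set (Equiv.Perm Ω)) : Prop :=
  ∀ n : ℕ, Set.Finite {o : Set (Fin n → Ω) | ∃ t : Fin n → Ω, o = {s | ∃ g ∈ G, s = tAct g t}}

/-- `G` acts without algebraicity on `Ω`: if the orbit of `a` under the pointwise
stabiliser of a finite tuple `y` is finite, then `a` is an entry of `y`. -/
def NoAlg {Ω : Type*} (G : Set (Equiv.Perm Ω)) : Prop :=
  ∀ (m : ℕ) (y : Fin m → Ω) (a : Ω),
    Set.Finite {b : Ω | ∃ g ∈ G, (∀ i, g (y i) = y i) ∧ b = g a} → ∃ i, a = y i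

/-- `G` is topologically closed in the space of permutations with the topology of
pointwise convergence. -/
def TopClosedPerm {Ω : Type*} (G : Set (Equiv.Perm Ω)) : Prop :=
  @IsClosed (Ω → Ω) (FnTop Ω Ω) {f | ∃ g ∈ G, f = ⇑g}

/-- The `r`-equivalence class of a tuple `u ∈ U`. -/
def cls {Ω : Type*} {n : ℕ} (U : Set (Fin n → Ω))
    (r : (Fin n → Ω) → (Fin n → Ω) → Prop) (u : Fin n → Ω) : Set (Fin n → Ω) :=
  {v ∈ U | r u v}

/-- The quotient `B = U/∼`, realised as the set of equivalence classes. -/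
def classes {Ω : Type*} {n : ℕ} (U : Set (Fin n → Ω))
    (r : (Fin n → Ω) → (Fin n → Ω) → Prop) : Set (Set (Fin n → Ω)) :=
  {c | ∃ u ∈ U, c = cls U r u}

/-- `a` entangles the class `c` if `a` is an entry of every tuple in `c`. -/
def Entangles {Ω : Type*} {n : ℕ} (a : Ω) (c : Set (Fin n → Ω)) : Prop :=
  ∀ v ∈ c, ∃ i, v i = a

/-- `a` strongly entangles `c ∈ B` if it entangles `c` and no other element of `B`. -/
def StronglyEntangles {Ω : Type*} {n : ℕ} (B : Set (Set (Fin n → Ω))) (a : Ω)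
    (c : Set (Fin n → Ω)) : Prop :=
  Entangles a c ∧ ∀ c' ∈ B, Entangles a c' → c' = c

/-- `a` is algebraic over `c`: the orbit of `a` under the stabiliser `G_c` is finite. -/
def AlgebraicOver {Ω : Type*} {n : ℕ} (G : Set (Equiv.Perm Ω)) (a : Ω)
    (c : Set (Fin n → Ω)) : Prop :=
  Set.Finite {b : Ω | ∃ g ∈ G, sAct g c = c ∧ b = g a}

/-- `B` is dense: for every `a ∈ Ω` there are `c₁,…,c_k ∈ B` whose joint stabiliser
is contained in the stabiliser of `a`. -/
def DenseClasses {Ω : Type*} {n : ℕ} (G : Set (Equiv.Perm Ω))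
    (B : Set (Set (Fin n → Ω))) : Prop :=
  ∀ a : Ω, ∃ (k : ℕ) (cc : Fin k → Set (Fin n → Ω)),
    (∀ i, cc i ∈ B) ∧ ∀ g ∈ G, (∀ i, sAct g (cc i) = cc i) → g a = a

/-- The induced action of `G` on `B` is without algebraicity. -/
def NoAlgOn {Ω : Type*} {n : ℕ} (G : Set (Equiv.Perm Ω))
    (B : Set (Set (Fin n → Ω))) : Prop :=
  ∀ (m : ℕ) (cc : Fin m → Set (Fin n → Ω)) (c : Set (Fin n → Ω)),
    (∀ i, cc i ∈ B) → c ∈ B →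
    Set.Finite {c' | ∃ g ∈ G, (∀ i, sAct g (cc i) = cc i) ∧ c' = sAct g c} →
    ∃ i, c = cc i

open FirstOrder Language Structure in
/-- A permutation is an automorphism of the `L`-structure `Ω` if it preserves
every relation and its complement. -/
def IsAutPerm (L : FirstOrder.Language) (Ω : Type*) [L.Structure Ω] (g : Equiv.Perm Ω) : Prop :=
  ∀ (n : ℕ) (R : L.Relations n) (t : Fin n → Ω), RelMap R (⇑g ∘ t) ↔ RelMap R t

open FirstOrder Language Structure in
/-- The automorphism group of the `L`-structure `Ω`, as a subgroup of `Equiv.Perm Ω`. -/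
def autGroup (L : FirstOrder.Language) (Ω : Type*) [L.Structure Ω] : Subgroup (Equiv.Perm Ω) where
  carrier := {g | IsAutPerm L Ω g}
  one_mem' := by
    intro n R t
    exact Iff.rfl
  mul_mem' := by
    intro a b ha hb n R t
    have h1 : ⇑(a * b) ∘ t = ⇑a ∘ (⇑b ∘ t) := by
      ext i; simp [Equiv.Perm.mul_apply]
    rw [h1]
    exact (ha n R (⇑b ∘ t)).trans (hb n R t)
  inv_mem' := by
    intro a ha n R t
    have h := ha n R (⇑a⁻¹ ∘ t)
    have h2 : ⇑a ∘ (⇑a⁻¹ ∘ t) = t := by ext i; simp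
    rw [h2] at h
    exact h.symm

/-- The topology of pointwise convergence on the automorphism group. -/
def autTop (L : FirstOrder.Language) (Ω : Type*) [L.Structure Ω] :
    TopologicalSpace (autGroup L Ω) :=
  TopologicalSpace.induced (fun g => ((g : Equiv.Perm Ω) : Ω → Ω)) (FnTop Ω Ω)

/-- A subset of `Ω^n` is first-order definable without parameters in the
`L`-structure `Ω`. -/
def FoDef (L : FirstOrder.Language) (Ω : Type*) [L.Structure Ω] {n : ℕ}
    (s : Set (Fin n → Ω)) : Prop :=
  ∃ φ : L.Formula (Fin n), s = {t | φ.Realize t}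

/-- `t'` lies in the `G`-orbit of `t`. -/
def SameOrb {Ω : Type*} (G : Set (Equiv.Perm Ω)) {m : ℕ} (t t' : Fin m → Ω) : Prop :=
  ∃ g ∈ G, t' = tAct g t

/-- `f` is canonical from the structure with automorphism set `G` to the structure
with automorphism set `H`: it maps `G`-orbits of tuples into `H`-orbits. -/
def Canonical {Ω Ω' : Type*} (G : Set (Equiv.Perm Ω)) (H : Set (Equiv.Perm Ω'))
    (f : Ω → Ω') : Prop :=
  ∀ (m : ℕ) (t t' : Fin m → Ω), SameOrb G t t' →
    SameOrb H (fun i => f (t i)) (fun i => f (t' i))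

open FirstOrder Language Structure in
/-- A structure is homogeneous if every isomorphism between finite induced
substructures extends to an automorphism. -/
def Homog (L : FirstOrder.Language) (Ω : Type*) [L.Structure Ω] : Prop :=
  ∀ (s : Finset Ω) (f : Ω → Ω), Set.InjOn f ↑s →
    (∀ (n : ℕ) (R : L.Relations n) (t : Fin n → Ω), (∀ i, t i ∈ s) →
      (RelMap R t ↔ RelMap R (f ∘ t))) →
    ∃ g : Equiv.Perm Ω, IsAutPerm L Ω g ∧ ∀ x ∈ s, g x = f x

open FirstOrder Language Structure in
/-- Interpretation of a relation symbol in an explicitly given structure. -/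
def relI {τ : FirstOrder.Language} {Ω : Type*} (S : τ.Structure Ω) {m : ℕ}
    (R : τ.Relations m) (t : Fin m → Ω) : Prop :=
  @RelMap τ Ω S m R t

/-!
Under homogeneity and oligomorphicity a set of tuples is definable iff it is invariant under the
automorphism group, so a bijection `θ` is a fo-bi-definition exactly when `θ` is
`(A,B)`-canonical and `θ⁻¹` is `(B,A)`-canonical. Hence a fo-bi-definition `θ` that is an
isomorphism `C → D` yields `f = θ`, `g = θ⁻¹`.

Conversely, given `f` and `g`, a back-and-forth over finite partial maps that agree with `k ∘ f`
for a single `k ∈ Aut(B)` produces a bijection `θ` such that `θ ∘ t` lies in the `Aut(B)`-orbit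
of `f ∘ t` for every tuple `t`. Going forth is free; going back, `g ∘ f` preserving `Aut(A)`-orbits
lets us pull the partial map back along `g`, and `f ∘ g` preserving `Aut(B)`-orbits pushes the
extension forward again. Then `θ` inherits canonicity from `f` and `θ⁻¹` from `g`, and (v), (vi)
together with `C`, `D` being reducts make `θ` an isomorphism `C → D`.
-/

open FirstOrder Language Structure

section Automorphisms

variable {L : Language} {Ω : Type*} [L.Structure Ω] {m : ℕ}

namespace SameOrb

theorem refl (t : Fin m → Ω) : SameOrb {g | IsAutPerm L Ω g} t t :=
  ⟨1, (autGroup L Ω).one_mem, rfl⟩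

theorem symm {t t' : Fin m → Ω} (h : SameOrb {g | IsAutPerm L Ω g} t t') :
    SameOrb {g | IsAutPerm L Ω g} t' t := by
  obtain ⟨g, hg, rfl⟩ := h
  exact ⟨g⁻¹, (autGroup L Ω).inv_mem hg, funext fun i => by simp [tAct]⟩

theorem trans {t t' t'' : Fin m → Ω} (h : SameOrb {g | IsAutPerm L Ω g} t t')
    (h' : SameOrb {g | IsAutPerm L Ω g} t' t'') : SameOrb {g | IsAutPerm L Ω g} t t'' := by
  obtain ⟨g, hg, rfl⟩ := h
  obtain ⟨g', hg', rfl⟩ := h'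
  exact ⟨g' * g, (autGroup L Ω).mul_mem hg' hg, rfl⟩

end SameOrb

namespace IsAutPerm

variable [L.IsRelational] {g : Equiv.Perm Ω}

def toLEquiv (h : IsAutPerm L Ω g) : Ω ≃[L] Ω where
  toEquiv := g
  map_fun' f := isEmptyElim f
  map_rel' R t := h _ R t

theorem realize_tAct (h : IsAutPerm L Ω g) (φ : L.Formula (Fin m)) (t : Fin m → Ω) :
    φ.Realize (tAct g t) ↔ φ.Realize t :=
  StrongHomClass.realize_formula h.toLEquiv φ

end IsAutPerm

theorem FoDef.tAct_mem_iff [L.IsRelational] {s : Set (Fin m → Ω)} (hs : FoDef L Ω s)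
    {g : Equiv.Perm Ω} (hg : IsAutPerm L Ω g) {t : Fin m → Ω} : tAct g t ∈ s ↔ t ∈ s := by
  obtain ⟨φ, rfl⟩ := hs
  exact hg.realize_tAct φ t

end Automorphisms

section Definability

variable {L : Language} {Ω : Type*} [L.Structure Ω] {m : ℕ}

theorem Homog.sameOrb_of_forall_realize (hhom : Homog L Ω) {t t' : Fin m → Ω}
    (h : ∀ φ : L.Formula (Fin m), φ.Realize t → φ.Realize t') :
    SameOrb {g | IsAutPerm L Ω g} t t' := by
  classical
  have hiff (φ : L.Formula (Fin m)) : φ.Realize t ↔ φ.Realize t' :=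
    ⟨h φ, fun h' => by_contra fun hn => (h φ.not (by simpa using hn)) h'⟩
  have heq (i j : Fin m) : t i = t j ↔ t' i = t' j := by
    simpa using hiff ((Term.var i).equal (Term.var j))
  have hF (i : Fin m) : Function.extend t t' id (t i) = t' i :=
    Function.FactorsThrough.extend_apply (fun i j hij => (heq i j).1 hij) id i
  obtain ⟨g, hg, hgF⟩ := hhom (Finset.univ.image t) (Function.extend t t' id)
    (by
      intro x hx y hy hxy
      obtain ⟨i, -, rfl⟩ := Finset.mem_image.1 hx
      obtain ⟨j, -, rfl⟩ := Finset.mem_image.1 hy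
      rw [hF, hF] at hxy
      exact (heq i j).2 hxy)
    (by
      intro k R u hu
      choose j hj using fun i => Finset.mem_image.1 (hu i)
      obtain rfl : u = fun i => t (j i) := funext fun i => (hj i).2.symm
      simpa [Function.comp_def, hF] using hiff (R.formula fun i => Term.var (j i)))
  exact ⟨g, hg, funext fun i => by rw [tAct, hgF _ (by simp), hF]⟩

theorem Oligo.exists_finset_sameOrb (holig : Oligo {g | IsAutPerm L Ω g}) (m : ℕ) :
    ∃ T : Finset (Fin m → Ω), ∀ u, ∃ v ∈ T, SameOrb {g | IsAutPerm L Ω g} v u := by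
  let orbit (t : Fin m → Ω) : Set (Fin m → Ω) := {s | SameOrb {g | IsAutPerm L Ω g} t s}
  have hfin : (Set.range orbit).Finite := (holig m).subset (by rintro _ ⟨t, rfl⟩; exact ⟨t, rfl⟩)
  obtain ⟨S, -, hS, hrange⟩ := Set.exists_subset_image_finite_and.1
    ⟨Set.range orbit, Set.image_univ.ge, hfin, subset_rfl⟩
  refine ⟨hS.toFinset, fun u => ?_⟩
  obtain ⟨v, hv, hvu⟩ := hrange ⟨u, rfl⟩
  refine ⟨v, hS.mem_toFinset.2 hv, ?_⟩
  show u ∈ orbit v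
  rw [hvu]
  exact SameOrb.refl u

variable [L.IsRelational]

theorem foDef_sameOrb (hhom : Homog L Ω) (holig : Oligo {g | IsAutPerm L Ω g}) (t : Fin m → Ω) :
    FoDef L Ω {u | SameOrb {g | IsAutPerm L Ω g} t u} := by
  obtain ⟨T, hT⟩ := holig.exists_finset_sameOrb m
  have hsep (v : Fin m → Ω) : ∃ φ : L.Formula (Fin m),
      φ.Realize t ∧ (φ.Realize v → SameOrb {g | IsAutPerm L Ω g} t v) := by
    by_cases htv : SameOrb {g | IsAutPerm L Ω g} t v
    · exact ⟨⊤, by simp, fun _ => htv⟩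
    · obtain ⟨φ, hφt, hφv⟩ : ∃ φ : L.Formula (Fin m), φ.Realize t ∧ ¬ φ.Realize v := by
        by_contra! hall
        exact htv (hhom.sameOrb_of_forall_realize hall)
      exact ⟨φ, hφt, fun h => absurd h hφv⟩
  choose φ hφt hφv using hsep
  refine ⟨Formula.iInf fun v : T => φ v, Set.ext fun u => ?_⟩
  simp only [Set.mem_ofPred_eq, Formula.realize_iInf]
  constructor
  · rintro ⟨g, hg, rfl⟩ v
    exact (hg.realize_tAct _ t).2 (hφt v)
  · intro hu
    obtain ⟨v, hvT, g, hg, rfl⟩ := hT u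
    exact (hφv v ((hg.realize_tAct _ v).1 (hu ⟨v, hvT⟩))).trans ⟨g, hg, rfl⟩

theorem foDef_of_forall_tAct_mem (hhom : Homog L Ω) (holig : Oligo {g | IsAutPerm L Ω g})
    {s : Set (Fin m → Ω)} (hs : ∀ g, IsAutPerm L Ω g → ∀ t ∈ s, tAct g t ∈ s) : FoDef L Ω s := by
  obtain ⟨T, hT⟩ := holig.exists_finset_sameOrb m
  choose φ hφ using fun v : Fin m → Ω => foDef_sameOrb hhom holig v
  have hφ' (v u : Fin m → Ω) : (φ v).Realize u ↔ SameOrb {g | IsAutPerm L Ω g} v u :=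
    (Set.ext_iff.1 (hφ v) u).symm
  refine ⟨Formula.iSup fun v : {v : T // (v : Fin m → Ω) ∈ s} => φ v, Set.ext fun u => ?_⟩
  simp only [Set.mem_ofPred_eq, Formula.realize_iSup, hφ']
  constructor
  · intro hu
    obtain ⟨v, hvT, hvu⟩ := hT u
    obtain ⟨g, hg, hv⟩ := hvu.symm
    exact ⟨⟨⟨v, hvT⟩, hv ▸ hs g hg u hu⟩, hvu⟩
  · rintro ⟨⟨⟨v, -⟩, hv⟩, g, hg, rfl⟩
    exact hs g hg v hv

end Definability

theorem Equiv.mem_image_comp_iff {ι α β : Type*} (e : α ≃ β) {s : Set (ι → α)} {v : ι → β} :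
    v ∈ (fun t => ⇑e ∘ t) '' s ↔ (fun i => e.symm (v i)) ∈ s := by
  constructor
  · rintro ⟨t, ht, rfl⟩
    simpa [Function.comp_def] using ht
  · exact fun hv => ⟨_, hv, funext fun i => by simp⟩

section Transport

variable {L₁ L₂ : Language} {Ω Ω' : Type*} [L₁.Structure Ω] [L₂.Structure Ω']

theorem isAutPerm_permCongr [L₁.IsRelational] (θ : Ω ≃ Ω')
    (hθ : ∀ (n : ℕ) (s : Set (Fin n → Ω')),
      FoDef L₂ Ω' s → FoDef L₁ Ω ((fun t => ⇑θ.symm ∘ t) '' s))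
    {h : Equiv.Perm Ω} (hh : IsAutPerm L₁ Ω h) : IsAutPerm L₂ Ω' (θ.permCongr h) := by
  intro n R u
  have hR := hθ n {v | RelMap R v} ⟨R.formula Term.var, by ext; simp⟩
  have hmem (v : Fin n → Ω') : RelMap R v ↔
      (fun i => θ.symm (v i)) ∈ (fun t => ⇑θ.symm ∘ t) '' {v : Fin n → Ω' | RelMap R v} := by
    rw [θ.symm.mem_image_comp_iff]
    simp
  rw [hmem, hmem u]
  convert hR.tAct_mem_iff hh using 2
  funext i
  simp [tAct]

theorem canonical_of_foDef_image_symm [L₁.IsRelational] (θ : Ω ≃ Ω')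
    (hθ : ∀ (n : ℕ) (s : Set (Fin n → Ω')),
      FoDef L₂ Ω' s → FoDef L₁ Ω ((fun t => ⇑θ.symm ∘ t) '' s)) :
    Canonical {g | IsAutPerm L₁ Ω g} {g | IsAutPerm L₂ Ω' g} θ := by
  rintro m t _ ⟨h, hh, rfl⟩
  exact ⟨θ.permCongr h, isAutPerm_permCongr θ hθ hh, funext fun i => by simp [tAct]⟩

theorem foDef_image_of_canonical_symm [L₁.IsRelational] [L₂.IsRelational]
    (hhom : Homog L₂ Ω') (holig : Oligo {g | IsAutPerm L₂ Ω' g}) (θ : Ω ≃ Ω')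
    (hθ : Canonical {g | IsAutPerm L₂ Ω' g} {g | IsAutPerm L₁ Ω g} θ.symm)
    {n : ℕ} {s : Set (Fin n → Ω)} (hs : FoDef L₁ Ω s) :
    FoDef L₂ Ω' ((fun t => ⇑θ ∘ t) '' s) := by
  refine foDef_of_forall_tAct_mem hhom holig fun k hk u hu => ?_
  rw [θ.mem_image_comp_iff] at hu ⊢
  obtain ⟨h, hh, hkh⟩ := hθ n u (tAct k u) ⟨k, hk, rfl⟩
  rw [hkh]
  exact (hs.tAct_mem_iff hh).2 hu

end Transport

section BackAndForth

variable {Ω Ω' : Type*} {H : Set (Equiv.Perm Ω')} {f : Ω → Ω'}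

abbrev FinApprox (H : Set (Equiv.Perm Ω')) (f : Ω → Ω') : Type _ :=
  {p : Finset (Ω × Ω') // ∃ k ∈ H, ∀ q ∈ p, k (f q.1) = q.2}

namespace FinApprox

theorem eq_iff_eq (hf : Function.Injective f) (p : FinApprox H f) {x x' : Ω} {y y' : Ω'}
    (hxy : (x, y) ∈ p.1) (hxy' : (x', y') ∈ p.1) : x = x' ↔ y = y' := by
  obtain ⟨k, -, hk⟩ := p.2
  rw [← show k (f x) = y from hk _ hxy, ← show k (f x') = y' from hk _ hxy', k.injective.eq_iff,
    hf.eq_iff]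

theorem isCofinal_fst (x : Ω) : IsCofinal {p : FinApprox H f | ∃ y, (x, y) ∈ p.1} := by
  classical
  rintro ⟨p, k, hk, hkp⟩
  refine ⟨⟨insert (x, k (f x)) p, k, hk, ?_⟩, ⟨_, Finset.mem_insert_self _ _⟩,
    Finset.subset_insert _ _⟩
  simpa using hkp

end FinApprox

open Encodable in
theorem exists_equiv_sameOrb_of_isCofinal [Countable Ω] [Countable Ω']
    (h1 : (1 : Equiv.Perm Ω') ∈ H) (hf : Function.Injective f)
    (hback : ∀ y, IsCofinal {p : FinApprox H f | ∃ x, (x, y) ∈ p.1}) :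
    ∃ θ : Ω ≃ Ω', ∀ (m : ℕ) (t : Fin m → Ω),
      SameOrb H (fun i => f (t i)) (fun i => θ (t i)) := by
  have := Encodable.ofCountable Ω
  have := Encodable.ofCountable Ω'
  let D : Ω ⊕ Ω' → Order.Cofinal (FinApprox H f) :=
    Sum.elim (fun x => ⟨_, FinApprox.isCofinal_fst x⟩) (fun y => ⟨_, hback y⟩)
  let s := Order.sequenceOfCofinals ⟨∅, 1, h1, by simp⟩ D
  have hs : Monotone s := Order.sequenceOfCofinals.monotone _ D
  have coh {n n' : ℕ} {x x' : Ω} {y y' : Ω'} (h : (x, y) ∈ (s n).1) (h' : (x', y') ∈ (s n').1) :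
      x = x' ↔ y = y' :=
    FinApprox.eq_iff_eq hf _ (hs (le_max_left n n') h) (hs (le_max_right n n') h')
  choose F hF using fun x => Order.sequenceOfCofinals.encode_mem _ D (.inl x)
  choose G hG using fun y => Order.sequenceOfCofinals.encode_mem _ D (.inr y)
  let θ : Ω ≃ Ω' :=
    { toFun := F
      invFun := G
      left_inv := fun x => (coh (hG (F x)) (hF x)).2 rfl
      right_inv := fun y => (coh (hF (G y)) (hG y)).1 rfl }
  refine ⟨θ, fun m t => ?_⟩
  let N := Finset.univ.sup fun i => encode (Sum.inl (t i) : Ω ⊕ Ω') + 1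
  have hN (i : Fin m) : (t i, F (t i)) ∈ (s N).1 :=
    hs (Finset.le_sup (f := fun i => encode (Sum.inl (t i) : Ω ⊕ Ω') + 1)
      (Finset.mem_univ i)) (hF (t i))
  obtain ⟨k, hk, hkN⟩ := (s N).2
  exact ⟨k, hk, funext fun i => (hkN _ (hN i)).symm⟩

end BackAndForth

theorem exists_forall_mem_of_sameOrb {α β : Type*} {G : Set (Equiv.Perm β)} (s : Finset α)
    {u v : α → β}
    (h : ∀ (m : ℕ) (t : Fin m → α), (∀ i, t i ∈ s) →
      SameOrb G (fun i => u (t i)) (fun i => v (t i))) :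
    ∃ k ∈ G, ∀ a ∈ s, k (u a) = v a := by
  obtain ⟨k, hk, hkv⟩ := h _ (fun i => (s.equivFin.symm i : α)) fun i => (s.equivFin.symm i).2
  refine ⟨k, hk, fun a ha => ?_⟩
  simpa [tAct] using (congrFun hkv (s.equivFin ⟨a, ha⟩)).symm

section CanonicalFunctions

variable {L₁ L₂ : Language} {Ω Ω' : Type*} [L₁.Structure Ω] [L₂.Structure Ω']
  {f : Ω → Ω'} {g : Ω' → Ω}

theorem Canonical.of_sameOrb {G : Set (Equiv.Perm Ω)} {f' : Ω → Ω'}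
    (hf : Canonical G {k | IsAutPerm L₂ Ω' k} f)
    (hff' : ∀ (m : ℕ) (t : Fin m → Ω),
      SameOrb {k | IsAutPerm L₂ Ω' k} (fun i => f (t i)) (fun i => f' (t i))) :
    Canonical G {k | IsAutPerm L₂ Ω' k} f' :=
  fun m t t' h => ((hff' m t).symm.trans (hf m t t' h)).trans (hff' m t')

theorem FinApprox.isCofinal_snd
    (hfcan : Canonical {h | IsAutPerm L₁ Ω h} {k | IsAutPerm L₂ Ω' k} f)
    (hgcan : Canonical {k | IsAutPerm L₂ Ω' k} {h | IsAutPerm L₁ Ω h} g)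
    (hgf : ∀ (m : ℕ) (t : Fin m → Ω), SameOrb {h | IsAutPerm L₁ Ω h} t (fun i => g (f (t i))))
    (hfg : ∀ (m : ℕ) (t : Fin m → Ω'), SameOrb {k | IsAutPerm L₂ Ω' k} t (fun i => f (g (t i))))
    (y : Ω') : IsCofinal {p : FinApprox {k | IsAutPerm L₂ Ω' k} f | ∃ x, (x, y) ∈ p.1} := by
  classical
  rintro ⟨p, k, hk, hkp⟩
  obtain ⟨h, hh, hph⟩ : ∃ h ∈ {h | IsAutPerm L₁ Ω h}, ∀ q ∈ p, h (g q.2) = q.1 := by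
    refine exists_forall_mem_of_sameOrb p fun m t ht => ?_
    have hfb : SameOrb {k | IsAutPerm L₂ Ω' k} (fun i => f (t i).1) (fun i => (t i).2) :=
      ⟨k, hk, funext fun i => (hkp _ (ht i)).symm⟩
    exact ((hgf m _).trans (hgcan m _ _ hfb)).symm
  obtain ⟨k', hk', hk'p⟩ : ∃ k' ∈ {k | IsAutPerm L₂ Ω' k},
      ∀ q ∈ insert (h (g y), y) p, k' (f q.1) = q.2 := by
    refine exists_forall_mem_of_sameOrb _ fun m t ht => ?_
    have hfst (i : Fin m) : (t i).1 = h (g (t i).2) := by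
      rcases Finset.mem_insert.1 (ht i) with hi | hi
      · rw [hi]
      · exact (hph _ hi).symm
    simp only [hfst]
    exact (hfcan m _ _ ⟨h, hh, rfl⟩).symm.trans (hfg m _).symm
  exact ⟨⟨_, k', hk', hk'p⟩, ⟨_, Finset.mem_insert_self _ _⟩, Finset.subset_insert _ _⟩

theorem exists_equiv_sameOrb_of_canonical [Countable Ω] [Countable Ω'] (hf : Function.Injective f)
    (hfcan : Canonical {h | IsAutPerm L₁ Ω h} {k | IsAutPerm L₂ Ω' k} f)
    (hgcan : Canonical {k | IsAutPerm L₂ Ω' k} {h | IsAutPerm L₁ Ω h} g)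
    (hgf : ∀ (m : ℕ) (t : Fin m → Ω), SameOrb {h | IsAutPerm L₁ Ω h} t (fun i => g (f (t i))))
    (hfg : ∀ (m : ℕ) (t : Fin m → Ω'), SameOrb {k | IsAutPerm L₂ Ω' k} t (fun i => f (g (t i)))) :
    ∃ θ : Ω ≃ Ω', ∀ (m : ℕ) (t : Fin m → Ω),
      SameOrb {k | IsAutPerm L₂ Ω' k} (fun i => f (t i)) (fun i => θ (t i)) :=
  exists_equiv_sameOrb_of_isCofinal (autGroup L₂ Ω').one_mem hf
    (FinApprox.isCofinal_snd hfcan hgcan hgf hfg)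

theorem sameOrb_symm_apply_of_sameOrb
    (hgcan : Canonical {k | IsAutPerm L₂ Ω' k} {h | IsAutPerm L₁ Ω h} g)
    (hgf : ∀ (m : ℕ) (t : Fin m → Ω), SameOrb {h | IsAutPerm L₁ Ω h} t (fun i => g (f (t i))))
    {θ : Ω ≃ Ω'} (hθ : ∀ (m : ℕ) (t : Fin m → Ω),
      SameOrb {k | IsAutPerm L₂ Ω' k} (fun i => f (t i)) (fun i => θ (t i)))
    (m : ℕ) (u : Fin m → Ω') :
    SameOrb {h | IsAutPerm L₁ Ω h} (fun i => g (u i)) (fun i => θ.symm (u i)) := by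
  have hu := hθ m fun i => θ.symm (u i)
  simp only [Equiv.apply_symm_apply] at hu
  exact ((hgf m _).trans (hgcan m _ _ hu)).symm

end CanonicalFunctions

theorem foBiDefinable_by_reduct_iso_iff_canonical_functions_general
    {Ω : Type} [Countable Ω]
    (L₁ L₂ τ : FirstOrder.Language) [L₁.IsRelational] [L₂.IsRelational]
    [L₁.Structure Ω] [L₂.Structure Ω]
    (hAhomog : Homog L₁ Ω) (hBhomog : Homog L₂ Ω)
    (hAoligo : Oligo {g : Equiv.Perm Ω | IsAutPerm L₁ Ω g})
    (hBoligo : Oligo {g : Equiv.Perm Ω | IsAutPerm L₂ Ω g})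
    (SC SD : τ.Structure Ω)
    -- `C` is a first-order reduct of `A`: each of its relations is a union of `Aut(A)`-orbits
    (hCreduct : ∀ (m : ℕ) (R : τ.Relations m) (g : Equiv.Perm Ω), IsAutPerm L₁ Ω g →
      ∀ t : Fin m → Ω, relI SC R t → relI SC R (tAct g t))
    -- `D` is a first-order reduct of `B`
    (hDreduct : ∀ (m : ℕ) (R : τ.Relations m) (g : Equiv.Perm Ω), IsAutPerm L₂ Ω g →
      ∀ t : Fin m → Ω, relI SD R t → relI SD R (tAct g t)) :
    -- (1) some isomorphism `C → D` is a fo-bi-definition of `A` and `B`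
    ((∃ θ : Ω ≃ Ω,
        (∀ (m : ℕ) (R : τ.Relations m) (t : Fin m → Ω),
          relI SC R t ↔ relI SD R (fun i => θ (t i))) ∧
        (∀ (n : ℕ) (s : Set (Fin n → Ω)),
          FoDef L₁ Ω s → FoDef L₂ Ω ((fun t => ⇑θ ∘ t) '' s)) ∧
        (∀ (n : ℕ) (s : Set (Fin n → Ω)),
          FoDef L₂ Ω s → FoDef L₁ Ω ((fun t => ⇑θ.symm ∘ t) '' s)))
      ↔
    -- (2) there are injective canonical functions as in the criterion
      (∃ f g : Ω → Ω, Function.Injective f ∧ Function.Injective g ∧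
        -- (i) `f` is (A,B)-canonical
        Canonical {g' : Equiv.Perm Ω | IsAutPerm L₁ Ω g'}
          {g' : Equiv.Perm Ω | IsAutPerm L₂ Ω g'} f ∧
        -- (ii) `g` is (B,A)-canonical
        Canonical {g' : Equiv.Perm Ω | IsAutPerm L₂ Ω g'}
          {g' : Equiv.Perm Ω | IsAutPerm L₁ Ω g'} g ∧
        -- (iii) `g ∘ f` preserves all orbits of `A`
        (∀ (m : ℕ) (t : Fin m → Ω),
          SameOrb {g' : Equiv.Perm Ω | IsAutPerm L₁ Ω g'} t (fun i => g (f (t i)))) ∧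
        -- (iv) `f ∘ g` preserves all orbits of `B`
        (∀ (m : ℕ) (t : Fin m → Ω),
          SameOrb {g' : Equiv.Perm Ω | IsAutPerm L₂ Ω g'} t (fun i => f (g (t i)))) ∧
        -- (v) `f` takes `A`-orbits in `R^C` to `B`-orbits in `R^D`
        (∀ (m : ℕ) (R : τ.Relations m) (t : Fin m → Ω),
          relI SC R t → relI SD R (fun i => f (t i))) ∧
        -- (vi) `g` takes `B`-orbits in `R^D` to `A`-orbits in `R^C`
        (∀ (m : ℕ) (R : τ.Relations m) (t : Fin m → Ω),
          relI SD R t → relI SC R (fun i => g (t i))))) := by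
  constructor
  · rintro ⟨θ, hiso, hfwd, hbwd⟩
    refine ⟨θ, θ.symm, θ.injective, θ.symm.injective, canonical_of_foDef_image_symm θ hbwd,
      canonical_of_foDef_image_symm θ.symm hfwd, fun m t => by simpa using SameOrb.refl t,
      fun m t => by simpa using SameOrb.refl t, fun m R t => (hiso m R t).1,
      fun m R t ht => (hiso m R _).2 (by simpa using ht)⟩
  · rintro ⟨f, g, hf, -, hfcan, hgcan, hgf, hfg, hfC, hgD⟩
    obtain ⟨θ, hθ⟩ := exists_equiv_sameOrb_of_canonical hf hfcan hgcan hgf hfg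
    have hθ' := sameOrb_symm_apply_of_sameOrb hgcan hgf hθ
    refine ⟨θ, fun m R t => ⟨fun ht => ?_, fun ht => ?_⟩,
      fun n s => foDef_image_of_canonical_symm hBhomog hBoligo θ (hgcan.of_sameOrb hθ'),
      fun n s => foDef_image_of_canonical_symm hAhomog hAoligo θ.symm (hfcan.of_sameOrb hθ)⟩
    · obtain ⟨k, hk, hkt⟩ := hθ m t
      exact hkt ▸ hDreduct m R k hk _ (hfC m R t ht)
    · obtain ⟨h, hh, hht⟩ := hθ' m fun i => θ (t i)
      have hC := hCreduct m R h hh _ (hgD m R _ ht)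
      rw [← hht] at hC
      simpa using hC

/-- Criterion for two homogeneous ω-categorical structures `A`, `B` to be
fo-bi-definable via an isomorphism between given first-order reducts `C`, `D`
in a common signature `τ`, in terms of canonical functions. -/
theorem foBiDefinable_by_reduct_iso_iff_canonical_functions
    {Ω : Type} [Countable Ω] [Infinite Ω]
    (L₁ L₂ τ : FirstOrder.Language) [L₁.IsRelational] [L₂.IsRelational] [τ.IsRelational]
    [L₁.Structure Ω] [L₂.Structure Ω]
    (hAhomog : Homog L₁ Ω) (hBhomog : Homog L₂ Ω)
    (hAoligo : Oligo {g : Equiv.Perm Ω | IsAutPerm L₁ Ω g})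
    (hBoligo : Oligo {g : Equiv.Perm Ω | IsAutPerm L₂ Ω g})
    (SC SD : τ.Structure Ω)
    -- `C` is a first-order reduct of `A`: each of its relations is a union of `Aut(A)`-orbits
    (hCreduct : ∀ (m : ℕ) (R : τ.Relations m) (g : Equiv.Perm Ω), IsAutPerm L₁ Ω g →
      ∀ t : Fin m → Ω, relI SC R t → relI SC R (tAct g t))
    -- `D` is a first-order reduct of `B`
    (hDreduct : ∀ (m : ℕ) (R : τ.Relations m) (g : Equiv.Perm Ω), IsAutPerm L₂ Ω g →
      ∀ t : Fin m → Ω, relI SD R t → relI SD R (tAct g t)) :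
    -- (1) some isomorphism `C → D` is a fo-bi-definition of `A` and `B`
    ((∃ θ : Ω ≃ Ω,
        (∀ (m : ℕ) (R : τ.Relations m) (t : Fin m → Ω),
          relI SC R t ↔ relI SD R (fun i => θ (t i))) ∧
        (∀ (n : ℕ) (s : Set (Fin n → Ω)),
          FoDef L₁ Ω s → FoDef L₂ Ω ((fun t => ⇑θ ∘ t) '' s)) ∧
        (∀ (n : ℕ) (s : Set (Fin n → Ω)),
          FoDef L₂ Ω s → FoDef L₁ Ω ((fun t => ⇑θ.symm ∘ t) '' s)))
      ↔
    -- (2) there are injective canonical functions as in the criterion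
      (∃ f g : Ω → Ω, Function.Injective f ∧ Function.Injective g ∧
        -- (i) `f` is (A,B)-canonical
        Canonical {g' : Equiv.Perm Ω | IsAutPerm L₁ Ω g'}
          {g' : Equiv.Perm Ω | IsAutPerm L₂ Ω g'} f ∧
        -- (ii) `g` is (B,A)-canonical
        Canonical {g' : Equiv.Perm Ω | IsAutPerm L₂ Ω g'}
          {g' : Equiv.Perm Ω | IsAutPerm L₁ Ω g'} g ∧
        -- (iii) `g ∘ f` preserves all orbits of `A`
        (∀ (m : ℕ) (t : Fin m → Ω),
          SameOrb {g' : Equiv.Perm Ω | IsAutPerm L₁ Ω g'} t (fun i => g (f (t i)))) ∧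
        -- (iv) `f ∘ g` preserves all orbits of `B`
        (∀ (m : ℕ) (t : Fin m → Ω),
          SameOrb {g' : Equiv.Perm Ω | IsAutPerm L₂ Ω g'} t (fun i => f (g (t i)))) ∧
        -- (v) `f` takes `A`-orbits in `R^C` to `B`-orbits in `R^D`
        (∀ (m : ℕ) (R : τ.Relations m) (t : Fin m → Ω),
          relI SC R t → relI SD R (fun i => f (t i))) ∧
        -- (vi) `g` takes `B`-orbits in `R^D` to `A`-orbits in `R^C`
        (∀ (m : ℕ) (R : τ.Relations m) (t : Fin m → Ω),
          relI SD R t → relI SC R (fun i => g (t i))))) :=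
  foBiDefinable_by_reduct_iso_iff_canonical_functions_general L₁ L₂ τ hAhomog hBhomog hAoligo
    hBoligo SC SD hCreduct hDreduct
end

section
/- Let Ω be a countably infinite set and let 𝒜 and ℬ be sets of finitary operations on Ω each of which is topologically closed (closed in each space Ω^(Ω^k) with the topology of pointwise convergence). Then a bijection θ: Ω → Ω satisfies: for all k, n ≥ 1 the coordinatewise image under θ of O_{k,n}^𝒜 equals O_{k,n}^ℬ (i.e., θ is an isomorphism from the structure E_𝒜 onto the structure E_ℬ), if and only if ℬ = {θ∘f∘(θ⁻¹)^k : f ∈ 𝒜 of arity k, k ≥ 1}, where θ∘f∘(θ⁻¹)^k denotes the conjugate operation (x₁,…,x_k) ↦ θ(f(θ⁻¹(x₁),…,θ⁻¹(x_k))). -/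
/-- The topology of pointwise convergence on `k`-ary operations. -/
def opTop (Ω : Type*) (k : ℕ) : TopologicalSpace ((Fin k → Ω) → Ω) :=
  @Pi.topologicalSpace _ _ (fun _ => ⊥)

/-- The relation `O_{k,n}` of the structure `E_𝒜`: all tuples
`(x₁,…,x_k, f(x₁,…,x_k))` with `x₁,…,x_k ∈ Ω^n` and `f ∈ 𝒜` of arity `k`,
encoded via `k+1` blocks of length `n`. -/
def ORel {Ω : Type*} (A : ∀ k : ℕ, Set ((Fin k → Ω) → Ω)) (k n : ℕ) :
    Set (Fin (k + 1) → Fin n → Ω) :=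
  {z | ∃ f ∈ A k, z (Fin.last k) = fun j => f (fun i => z (Fin.castSucc i) j)}

lemma mem_of_finite_agree {Ω : Type} [Nonempty Ω] {k : ℕ}
    {S : Set ((Fin k → Ω) → Ω)} (hS : @IsClosed _ (opTop Ω k) S)
    (g : (Fin k → Ω) → Ω)
    (h : ∀ I : Finset (Fin k → Ω), ∃ f ∈ S, ∀ v ∈ I, f v = g v) :
    g ∈ S := by
  letI : TopologicalSpace Ω := ⊥
  have hS' : IsClosed S := hS
  rw [← hS'.closure_eq, mem_closure_iff]
  intro o ho hgo
  rcases isOpen_pi_iff.mp ho g hgo with ⟨I, u, hu, hsub⟩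
  obtain ⟨f, hfS, hf⟩ := h I
  exact ⟨f, hsub fun v hv => by rw [hf v hv]; exact (hu v hv).2, hfS⟩

lemma exists_enum {α : Type} [Nonempty α] (I : Finset α) :
    ∃ (n : ℕ) (e : Fin (n + 1) → α), ∀ v ∈ I, ∃ j, e j = v := by
  classical
  refine ⟨I.toList.length, fun j => I.toList.getD j (Classical.arbitrary α), ?_⟩
  intro v hv
  obtain ⟨m, hm⟩ := List.mem_iff_get.mp (Finset.mem_toList.mpr hv)
  exact ⟨⟨m, Nat.lt_succ_of_lt m.2⟩, by simp [List.getElem?_eq_getElem m.2, ← hm, List.get_eq_getElem]⟩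

/-- A bijection `θ` is an isomorphism from `E_𝒜` onto `E_ℬ` (for topologically
closed sets of finitary operations `𝒜`, `ℬ`) if and only if `ℬ` is the set of
conjugates of members of `𝒜` by `θ`. -/
theorem ORel_structure_iso_iff_conjugate
    {Ω : Type} [Countable Ω] [Infinite Ω]
    (A B : ∀ k : ℕ, Set ((Fin k → Ω) → Ω))
    (hAclosed : ∀ k : ℕ, @IsClosed _ (opTop Ω k) (A k))
    (hBclosed : ∀ k : ℕ, @IsClosed _ (opTop Ω k) (B k))
    (θ : Equiv.Perm Ω) :
    (∀ k n : ℕ, 1 ≤ k → 1 ≤ n →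
      (fun z : Fin (k + 1) → Fin n → Ω => fun i j => θ (z i j)) '' ORel A k n = ORel B k n)
    ↔ (∀ k : ℕ, 1 ≤ k →
      B k = (fun f : (Fin k → Ω) → Ω => fun v => θ (f (fun i => θ.symm (v i)))) '' A k) := by
  constructor
  · intro H k hk
    ext g
    constructor
    · -- g ∈ B k → g is a conjugate
      intro hg
      refine ⟨fun v => θ.symm (g fun i => θ (v i)), ?_, ?_⟩
      · -- θ⁻¹ ∘ g ∘ θ^k ∈ A k
        apply mem_of_finite_agree (hAclosed k)
        intro I
        obtain ⟨n, e, he⟩ := exists_enum I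
        set w : Fin (k + 1) → Fin (n + 1) → Ω :=
          fun i j => Fin.lastCases (g fun i' => θ (e j i')) (fun i' => θ (e j i')) i with hw
        have hwB : w ∈ ORel B k (n + 1) := by
          refine ⟨g, hg, ?_⟩
          funext j
          simp [hw]
        rw [← H k (n + 1) hk (by omega)] at hwB
        obtain ⟨z, hzA, hz⟩ := hwB
        obtain ⟨f', hf', hzeq⟩ := hzA
        refine ⟨f', hf', ?_⟩
        intro v hv
        obtain ⟨j, rfl⟩ := he v hv
        have h1 : ∀ i j', θ (z i j') = w i j' := fun i j' => congrFun (congrFun hz i) j'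
        have h2 : z (Fin.last k) j = f' fun i => z (Fin.castSucc i) j := congrFun hzeq j
        have h3 : ∀ i, z (Fin.castSucc i) j = e j i := by
          intro i
          have := h1 (Fin.castSucc i) j
          simp [hw] at this
          exact θ.injective (by rw [this])
        have h4 : θ (z (Fin.last k) j) = g fun i' => θ (e j i') := by
          have := h1 (Fin.last k) j; simpa [hw] using this
        calc f' (e j) = f' fun i => z (Fin.castSucc i) j := by
              congr 1; funext i; rw [h3]
          _ = z (Fin.last k) j := h2.symm
          _ = θ.symm (g fun i' => θ (e j i')) := by
              rw [← h4]; simp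
      · -- conjugating back gives g
        funext v
        simp
    · -- conjugates of A k lie in B k
      rintro ⟨f, hf, rfl⟩
      apply mem_of_finite_agree (hBclosed k)
      intro I
      obtain ⟨n, e, he⟩ := exists_enum I
      set z : Fin (k + 1) → Fin (n + 1) → Ω :=
        fun i j => Fin.lastCases (f fun i' => θ.symm (e j i')) (fun i' => θ.symm (e j i')) i with hz
      have hzA : z ∈ ORel A k (n + 1) := by
        refine ⟨f, hf, ?_⟩
        funext j
        simp [hz]
      have himg : (fun i j => θ (z i j)) ∈ ORel B k (n + 1) := by
        rw [← H k (n + 1) hk (by omega)]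
        exact ⟨z, hzA, rfl⟩
      obtain ⟨f', hf', heq⟩ := himg
      refine ⟨f', hf', ?_⟩
      intro v hv
      obtain ⟨j, rfl⟩ := he v hv
      have h2 : θ (z (Fin.last k) j) = f' fun i => θ (z (Fin.castSucc i) j) := congrFun heq j
      have h3 : (fun i => θ (z (Fin.castSucc i) j)) = e j := by
        funext i; simp [hz]
      rw [h3] at h2
      rw [← h2]
      simp [hz]
  · -- easy direction
    intro H k n hk hn
    ext w
    constructor
    · rintro ⟨z, ⟨f, hf, hzeq⟩, rfl⟩
      refine ⟨fun v => θ (f fun i => θ.symm (v i)), ?_, ?_⟩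
      · rw [H k hk]; exact ⟨f, hf, rfl⟩
      · funext j
        simp [congrFun hzeq j]
    · intro hw
      obtain ⟨g, hg, hweq⟩ := hw
      rw [H k hk] at hg
      obtain ⟨f, hf, rfl⟩ := hg
      refine ⟨fun i j => θ.symm (w i j), ⟨f, hf, ?_⟩, ?_⟩
      · funext j
        have := congrFun hweq j
        simp only at this ⊢
        rw [this]
        simp
      · funext i j
        simp
end

section
/- Let A be an ω-categorical relational structure with countably infinite domain Ω. Then each of the structures E_{Aut(A)}, E_{End(A)} and E_{Pol(A)} is ω-categorical; that is, for 𝒜 ∈ {Aut(A), End(A), Pol(A)}, the group of all bijections θ: Ω → Ω with θ(O_{k,n}^𝒜) = O_{k,n}^𝒜 for all k, n ≥ 1 is oligomorphic. -/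
open FirstOrder Language Structure in
/-- The automorphisms of the `L`-structure `Ω`, viewed as a set of (unary)
finitary operations, indexed by arity. -/
def AutFam (L : FirstOrder.Language) (Ω : Type*) [L.Structure Ω] :
    ∀ k : ℕ, Set ((Fin k → Ω) → Ω) := fun k =>
  {h | ∃ g : Equiv.Perm Ω, IsAutPerm L Ω g ∧
    ∃ hk : k = 1, ∀ v : Fin k → Ω, h v = g (v (Fin.cast hk.symm 0))}

open FirstOrder Language Structure in
/-- The endomorphisms of the `L`-structure `Ω`, viewed as a set of (unary)
finitary operations, indexed by arity. -/
def EndFam (L : FirstOrder.Language) (Ω : Type*) [L.Structure Ω] :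
    ∀ k : ℕ, Set ((Fin k → Ω) → Ω) := fun k =>
  {h | ∃ e : Ω → Ω, (∀ (m : ℕ) (R : L.Relations m) (t : Fin m → Ω),
      RelMap R t → RelMap R (e ∘ t)) ∧
    ∃ hk : k = 1, ∀ v : Fin k → Ω, h v = e (v (Fin.cast hk.symm 0))}

open FirstOrder Language Structure in
/-- The polymorphisms of the `L`-structure `Ω`, indexed by arity. -/
def PolFam (L : FirstOrder.Language) (Ω : Type*) [L.Structure Ω] :
    ∀ k : ℕ, Set ((Fin k → Ω) → Ω) := fun k =>
  {h | ∀ (m : ℕ) (R : L.Relations m) (ts : Fin k → Fin m → Ω),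
    (∀ j, RelMap R (ts j)) → RelMap R (fun i => h (fun j => ts j i))}

/-- The automorphisms of the structure `E_𝒜`: permutations preserving every
relation `O_{k,n}` setwise. -/
def EAut {Ω : Type*} (A : ∀ k : ℕ, Set ((Fin k → Ω) → Ω)) : Set (Equiv.Perm Ω) :=
  {θ | ∀ k n : ℕ, 1 ≤ k → 1 ≤ n →
    (fun z : Fin (k + 1) → Fin n → Ω => fun i j => θ (z i j)) '' ORel A k n = ORel A k n}

/-! Every automorphism `σ` of `A` is an automorphism of `E_𝒜`, because each of the three
families `𝒜` is closed under conjugation `f ↦ σ ∘ f ∘ σ⁻¹`. Hence `E_𝒜` has a larger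
automorphism group than `A`, and a larger group has no more orbits on `n`-tuples. -/

open FirstOrder Language Structure

section Permutations

variable {Ω : Type*}

/-- Each `H`-orbit is the `H`-saturation of a `G`-orbit. -/
theorem Oligo.mono {G H : Submonoid (Equiv.Perm Ω)} (hGH : G ≤ H)
    (hG : Oligo (G : Set (Equiv.Perm Ω))) : Oligo (H : Set (Equiv.Perm Ω)) := by
  intro n
  let orbitH : Set (Fin n → Ω) → Set (Fin n → Ω) :=
    fun c => {s | ∃ h ∈ H, ∃ u ∈ c, s = tAct h u}
  refine ((hG n).image orbitH).subset ?_
  rintro o ⟨t, rfl⟩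
  refine ⟨_, ⟨t, rfl⟩, Set.Subset.antisymm ?_ ?_⟩
  · rintro s ⟨h, hh, _, ⟨g, hg, rfl⟩, rfl⟩
    exact ⟨h * g, H.mul_mem hh (hGH hg), rfl⟩
  · rintro s ⟨h, hh, rfl⟩
    exact ⟨h, hh, t, ⟨1, G.one_mem, rfl⟩, rfl⟩

def conjOp (σ : Equiv.Perm Ω) {k : ℕ} (f : (Fin k → Ω) → Ω) : (Fin k → Ω) → Ω :=
  fun v => σ (f (⇑σ⁻¹ ∘ v))

def IsConjInvariant (G : Subgroup (Equiv.Perm Ω)) (A : ∀ k : ℕ, Set ((Fin k → Ω) → Ω)) :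
    Prop :=
  ∀ σ ∈ G, ∀ k, ∀ f ∈ A k, conjOp σ f ∈ A k

theorem image_ORel_subset {A : ∀ k : ℕ, Set ((Fin k → Ω) → Ω)} {σ : Equiv.Perm Ω}
    (hσ : ∀ k, ∀ f ∈ A k, conjOp σ f ∈ A k) (k n : ℕ) :
    (fun z : Fin (k + 1) → Fin n → Ω => fun i j => σ (z i j)) '' ORel A k n ⊆ ORel A k n := by
  rintro _ ⟨z, ⟨f, hf, hz⟩, rfl⟩
  refine ⟨conjOp σ f, hσ k f hf, ?_⟩
  funext j
  simp [hz, conjOp, Function.comp_def]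

def eAutSubmonoid (A : ∀ k : ℕ, Set ((Fin k → Ω) → Ω)) : Submonoid (Equiv.Perm Ω) where
  carrier := EAut A
  one_mem' _ _ _ _ := by simp
  mul_mem' {θ₁ θ₂} h₁ h₂ k n hk hn := by
    have hcomp : (fun z : Fin (k + 1) → Fin n → Ω => fun i j => (θ₁ * θ₂) (z i j)) =
        (fun z i j => θ₁ (z i j)) ∘ (fun z i j => θ₂ (z i j)) := rfl
    rw [hcomp, Set.image_comp, h₂ k n hk hn, h₁ k n hk hn]

theorem le_eAutSubmonoid {G : Subgroup (Equiv.Perm Ω)} {A : ∀ k : ℕ, Set ((Fin k → Ω) → Ω)}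
    (hA : IsConjInvariant G A) : G.toSubmonoid ≤ eAutSubmonoid A := by
  intro σ hσ k n _ _
  refine (image_ORel_subset (hA σ hσ) k n).antisymm fun z hz => ?_
  refine ⟨fun i j => σ⁻¹ (z i j), image_ORel_subset (hA σ⁻¹ (G.inv_mem hσ)) k n ⟨z, hz, rfl⟩, ?_⟩
  simp

end Permutations

section Structures

variable {L : FirstOrder.Language} {Ω : Type*} [L.Structure Ω]

theorem isConjInvariant_autFam : IsConjInvariant (autGroup L Ω) (AutFam L Ω) := by
  rintro σ hσ k f ⟨g, hg, rfl, hf⟩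
  refine ⟨σ * g * σ⁻¹, (autGroup L Ω).mul_mem ((autGroup L Ω).mul_mem hσ hg)
    ((autGroup L Ω).inv_mem hσ), rfl, fun v => ?_⟩
  simp [conjOp, hf]

theorem isConjInvariant_endFam : IsConjInvariant (autGroup L Ω) (EndFam L Ω) := by
  rintro σ hσ k f ⟨e, he, rfl, hf⟩
  refine ⟨σ ∘ e ∘ ⇑σ⁻¹, fun m R t ht => ?_, rfl, fun v => ?_⟩
  · exact (hσ m R _).mpr (he m R _ (((autGroup L Ω).inv_mem hσ m R t).mpr ht))
  · simp [conjOp, hf]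

theorem isConjInvariant_polFam : IsConjInvariant (autGroup L Ω) (PolFam L Ω) := by
  intro σ hσ k f hf m R ts hts
  have hts' : ∀ j, RelMap R (⇑σ⁻¹ ∘ ts j) := fun j =>
    ((autGroup L Ω).inv_mem hσ m R (ts j)).mpr (hts j)
  exact (hσ m R _).mpr (hf m R _ hts')

end Structures

theorem ORel_structures_omegaCategorical_general
    {Ω : Type}
    (L : FirstOrder.Language) [L.Structure Ω]
    (hAoligo : Oligo {g : Equiv.Perm Ω | IsAutPerm L Ω g}) :
    Oligo (EAut (AutFam L Ω)) ∧ Oligo (EAut (EndFam L Ω)) ∧ Oligo (EAut (PolFam L Ω)) :=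
  have hE : ∀ A, IsConjInvariant (autGroup L Ω) A → Oligo (EAut A) := fun _ hA =>
    Oligo.mono (le_eAutSubmonoid hA) hAoligo
  ⟨hE _ isConjInvariant_autFam, hE _ isConjInvariant_endFam, hE _ isConjInvariant_polFam⟩

/-- If `A` is an ω-categorical structure, then the structures `E_{Aut(A)}`,
`E_{End(A)}` and `E_{Pol(A)}` are ω-categorical as well. -/
theorem ORel_structures_omegaCategorical
    {Ω : Type} [Countable Ω] [Infinite Ω]
    (L : FirstOrder.Language) [L.IsRelational] [L.Structure Ω]
    (hAoligo : Oligo {g : Equiv.Perm Ω | IsAutPerm L Ω g}) :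
    Oligo (EAut (AutFam L Ω)) ∧ Oligo (EAut (EndFam L Ω)) ∧ Oligo (EAut (PolFam L Ω)) :=
  ORel_structures_omegaCategorical_general L hAoligo
end

section
/- Let G be a topologically closed oligomorphic permutation group on a countably infinite set Ω acting without algebraicity, let U ⊆ Ω^n be G-invariant, let ∼ be a G-invariant equivalence relation on U, let B := U/∼ be dense, and assume the induced action of G on B is without algebraicity. Then for every a ∈ Ω and c ∈ B: a entangles c if and only if a is algebraic over c. -/
theorem entangles_iff_algebraicOver
    {Ω : Type} [Countable Ω] [Infinite Ω]
    (G : Subgroup (Equiv.Perm Ω))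
    (hGclosed : TopClosedPerm (G : Set (Equiv.Perm Ω)))
    (hGoligo : Oligo (G : Set (Equiv.Perm Ω)))
    (hGnoalg : NoAlg (G : Set (Equiv.Perm Ω)))
    {n : ℕ} (U : Set (Fin n → Ω))
    (hUinv : ∀ g ∈ G, ∀ u ∈ U, tAct g u ∈ U)
    (r : (Fin n → Ω) → (Fin n → Ω) → Prop)
    (hrefl : ∀ u ∈ U, r u u)
    (hsymm : ∀ u ∈ U, ∀ v ∈ U, r u v → r v u)
    (htrans : ∀ u ∈ U, ∀ v ∈ U, ∀ w ∈ U, r u v → r v w → r u w)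
    (hrinv : ∀ g ∈ G, ∀ u ∈ U, ∀ v ∈ U, r u v → r (tAct g u) (tAct g v))
    (hdense : DenseClasses (G : Set (Equiv.Perm Ω)) (classes U r))
    (hBnoalg : NoAlgOn (G : Set (Equiv.Perm Ω)) (classes U r)) :
    ∀ (a : Ω), ∀ c ∈ classes U r,
      (Entangles a c ↔ AlgebraicOver (G : Set (Equiv.Perm Ω)) a c) := by
  intro a c hc
  obtain ⟨u, hu, rfl⟩ := hc
  constructor
  · -- Entangles → AlgebraicOver
    intro hent
    apply Set.Finite.subset (Set.finite_range u)
    rintro b ⟨g, hg, hgc, rfl⟩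
    have hinvc : sAct g⁻¹ (cls U r u) = cls U r u := by
      conv_lhs => rw [← hgc]
      have hid : ∀ x : Fin n → Ω, tAct g⁻¹ (tAct g x) = x := by
        intro x; funext i; simp [tAct]
      simp [sAct, Set.image_image, hid]
    have humem : u ∈ cls U r u := ⟨hu, hrefl u hu⟩
    have hmem : tAct g⁻¹ u ∈ cls U r u := by
      rw [← hinvc]; exact ⟨u, humem, rfl⟩
    obtain ⟨i, hi⟩ := hent _ hmem
    refine ⟨i, ?_⟩
    have := congrArg g hi
    simpa [tAct] using this
  · -- AlgebraicOver → Entangles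
    intro halg v hv
    obtain ⟨hvU, hruv⟩ := hv
    have key : Set.Finite {b : Ω | ∃ g ∈ (G : Set (Equiv.Perm Ω)),
        (∀ i, g (v i) = v i) ∧ b = g a} := by
      apply halg.subset
      rintro b ⟨g, hg, hfix, rfl⟩
      refine ⟨g, hg, ?_, rfl⟩
      have hfix' : ∀ i, g⁻¹ (v i) = v i := by
        intro i
        have := congrArg (⇑g⁻¹) (hfix i)
        simpa using this.symm
      have htv : tAct g v = v := funext hfix
      have htv' : tAct g⁻¹ v = v := funext hfix'
      -- cls U r u = cls U r v
      have hcls : cls U r u = cls U r v := by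
        ext w
        constructor
        · rintro ⟨hwU, hruw⟩
          exact ⟨hwU, htrans v hvU u hu w hwU (hsymm u hu v hvU hruv) hruw⟩
        · rintro ⟨hwU, hrvw⟩
          exact ⟨hwU, htrans u hu v hvU w hwU hruv hrvw⟩
      rw [hcls]
      ext w
      constructor
      · rintro ⟨w', ⟨hw'U, hrvw'⟩, rfl⟩
        refine ⟨hUinv g hg w' hw'U, ?_⟩
        have := hrinv g hg v hvU w' hw'U hrvw'
        rwa [htv] at this
      · rintro ⟨hwU, hrvw⟩
        refine ⟨tAct g⁻¹ w, ⟨hUinv g⁻¹ (inv_mem hg) w hwU, ?_⟩, ?_⟩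
        · have := hrinv g⁻¹ (inv_mem hg) v hvU w hwU hrvw
          rwa [htv'] at this
        · funext i
          simp [tAct]
    obtain ⟨i, hi⟩ := hGnoalg n v a key
    exact ⟨i, hi.symm⟩
end

section
/- Let G be a topologically closed oligomorphic permutation group on a countably infinite set Ω acting without algebraicity, let U ⊆ Ω^n be G-invariant, let ∼ be a G-invariant equivalence relation on U, let B := U/∼ be dense, and assume the induced action of G on B is without algebraicity. Then every a ∈ Ω entangles some c ∈ B. -/
theorem every_point_entangles_some_class
    {Ω : Type} [Countable Ω] [Infinite Ω]
    (G : Subgroup (Equiv.Perm Ω))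
    (hGclosed : TopClosedPerm (G : Set (Equiv.Perm Ω)))
    (hGoligo : Oligo (G : Set (Equiv.Perm Ω)))
    (hGnoalg : NoAlg (G : Set (Equiv.Perm Ω)))
    {n : ℕ} (U : Set (Fin n → Ω))
    (hUinv : ∀ g ∈ G, ∀ u ∈ U, tAct g u ∈ U)
    (r : (Fin n → Ω) → (Fin n → Ω) → Prop)
    (hrefl : ∀ u ∈ U, r u u)
    (hsymm : ∀ u ∈ U, ∀ v ∈ U, r u v → r v u)
    (htrans : ∀ u ∈ U, ∀ v ∈ U, ∀ w ∈ U, r u v → r v w → r u w)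
    (hrinv : ∀ g ∈ G, ∀ u ∈ U, ∀ v ∈ U, r u v → r (tAct g u) (tAct g v))
    (hdense : DenseClasses (G : Set (Equiv.Perm Ω)) (classes U r))
    (hBnoalg : NoAlgOn (G : Set (Equiv.Perm Ω)) (classes U r)) :
    ∀ a : Ω, ∃ c ∈ classes U r, Entangles a c := by
  
  intro a
  by_contra hcon
  push_neg at hcon
  obtain ⟨k, cc, hccB, hstab⟩ := hdense a
  have hbad : ∀ i : Fin k, ∃ v ∈ cc i, ∀ j, v j ≠ a := by
    intro i
    have h := hcon (cc i) (hccB i)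
    unfold Entangles at h
    push_neg at h
    exact h
  choose v hv hva using hbad
  set e := finProdFinEquiv (m := k) (n := n) with he
  set y : Fin (k * n) → Ω := fun j => v (e.symm j).1 (e.symm j).2 with hy
  have horb : {b : Ω | ∃ g ∈ (G : Set (Equiv.Perm Ω)), (∀ i, g (y i) = y i) ∧ b = g a}
      ⊆ {a} := by
    rintro b ⟨g, hg, hfix, hb⟩
    have hg' : g ∈ G := hg
    have hvfix : ∀ i : Fin k, tAct g (v i) = v i := by
      intro i; funext j
      have h := hfix (e (i, j))
      simpa [hy, tAct] using h
    have hvfix' : ∀ i : Fin k, tAct g⁻¹ (v i) = v i := by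
      intro i
      funext j
      have h := congrFun (hvfix i) j
      simp only [tAct] at h ⊢
      exact (Equiv.symm_apply_eq g).mpr h.symm
    have hstabc : ∀ i, sAct g (cc i) = cc i := by
      intro i
      obtain ⟨u, hu, hcu⟩ := hccB i
      have hvmem := hv i
      rw [hcu] at hvmem
      obtain ⟨hvU, hruv⟩ := hvmem
      have hcls : cc i = cls U r (v i) := by
        rw [hcu]
        ext w
        constructor
        · rintro ⟨hwU, hruw⟩
          exact ⟨hwU, htrans _ hvU _ hu _ hwU (hsymm _ hu _ hvU hruv) hruw⟩
        · rintro ⟨hwU, hrvw⟩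
          exact ⟨hwU, htrans _ hu _ hvU _ hwU hruv hrvw⟩
      rw [hcls]
      ext w
      constructor
      · rintro ⟨w', ⟨hw'U, hrw'⟩, rfl⟩
        refine ⟨hUinv g hg' _ hw'U, ?_⟩
        have h2 := hrinv g hg' _ hvU _ hw'U hrw'
        rwa [hvfix i] at h2
      · rintro ⟨hwU, hrw⟩
        refine ⟨tAct g⁻¹ w, ⟨hUinv g⁻¹ (G.inv_mem hg') _ hwU, ?_⟩, ?_⟩
        · have h2 := hrinv g⁻¹ (G.inv_mem hg') _ hvU _ hwU hrw
          rwa [hvfix' i] at h2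
        · funext j; simp [tAct]
    have := hstab g hg' hstabc
    simp [hb, this]
  have hfin : Set.Finite {b : Ω | ∃ g ∈ (G : Set (Equiv.Perm Ω)),
      (∀ i, g (y i) = y i) ∧ b = g a} :=
    Set.Finite.subset (Set.finite_singleton a) horb
  obtain ⟨i, hi⟩ := hGnoalg (k * n) y a hfin
  exact hva (e.symm i).1 (e.symm i).2 hi.symm
end

section
/- Let G be a topologically closed oligomorphic permutation group on a countably infinite set Ω acting without algebraicity, let U ⊆ Ω^n be G-invariant, let ∼ be a G-invariant equivalence relation on U, let B := U/∼ be dense, and assume the induced action of G on B is without algebraicity. Then every c ∈ B is strongly entangled by some a ∈ Ω. -/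
/-!
Say a set `S` of classes pins `x ∈ Ω` if the joint stabiliser of `S` fixes `x`. Write `c` as the
class of a tuple `u`. Some entry `x` of `u` is pinned only by finite sets of classes containing `c`:
otherwise, choosing for each entry a finite pinning set avoiding `c`, the joint stabiliser of their
union fixes `u`, hence `c`, against the absence of algebraicity on `B`. Density gives a finite
`S₀ ⊆ B` pinning `x`, and `S₀` then contains the whole `G_x`-orbit of `c`. If `x` entangles some
`d ∈ B`, the `G_d`-orbit of `x` lies among the entries of one tuple of `d`, so the `G_d`-orbit of
`c` is finite as well, and `c = d`. Finally `x` does entangle a member of `S₀`: otherwise tuples in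
the members of `S₀` avoiding `x` would have a joint stabiliser fixing `x`, against the absence of
algebraicity on `Ω`.
-/

open scoped Pointwise
open Equiv

section

variable {Ω : Type*} {n : ℕ}

theorem tAct_eq_smul (g : Perm Ω) (u : Fin n → Ω) : tAct g u = g • u := rfl

theorem sAct_eq_smul (g : Perm Ω) (c : Set (Fin n → Ω)) : sAct g c = g • c := rfl

def Pins (G : Set (Perm Ω)) (S : Set (Set (Fin n → Ω))) (x : Ω) : Prop :=
  ∀ g ∈ G, (∀ f ∈ S, g • f = f) → g x = x

theorem Pins.smul {G : Subgroup (Perm Ω)} {S : Set (Set (Fin n → Ω))} {x : Ω} (h : Pins G S x)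
    {k : Perm Ω} (hk : k ∈ G) : Pins G (k • S) (k x) := by
  intro g hg hgS
  have hconj : ∀ f ∈ S, (k⁻¹ * g * k) • f = f := fun f hf => by
    rw [mul_smul, mul_smul, hgS _ (Set.smul_mem_smul_set hf), inv_smul_smul]
  have := h _ (mul_mem (mul_mem (inv_mem hk) hg) hk) hconj
  rwa [Perm.mul_apply, Perm.mul_apply, Perm.inv_eq_iff_eq] at this

theorem NoAlg.mem_of_finite_orbit {G : Set (Perm Ω)} (hG : NoAlg G) {A : Set Ω} (hA : A.Finite)
    {x : Ω} (hx : {b | ∃ g ∈ G, (∀ a ∈ A, g a = a) ∧ b = g x}.Finite) : x ∈ A := by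
  obtain ⟨m, y, rfl⟩ := hA.fin_embedding
  obtain ⟨i, rfl⟩ := hG m y x <| hx.subset <| by
    rintro _ ⟨g, hg, hgy, rfl⟩
    exact ⟨g, hg, Set.forall_mem_range.2 hgy, rfl⟩
  exact Set.mem_range_self i

theorem NoAlgOn.mem_of_finite_orbit {G : Set (Perm Ω)} {B : Set (Set (Fin n → Ω))}
    (hB : NoAlgOn G B) {S : Set (Set (Fin n → Ω))} (hS : S.Finite) (hSB : S ⊆ B)
    {c : Set (Fin n → Ω)} (hc : c ∈ B)
    (h : {e | ∃ g ∈ G, (∀ f ∈ S, g • f = f) ∧ e = g • c}.Finite) : c ∈ S := by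
  obtain ⟨m, cc, rfl⟩ := hS.fin_embedding
  obtain ⟨i, rfl⟩ := hB m cc c (fun i => hSB (Set.mem_range_self i)) hc <| h.subset <| by
    rintro _ ⟨g, hg, hgc, rfl⟩
    exact ⟨g, hg, Set.forall_mem_range.2 hgc, rfl⟩
  exact Set.mem_range_self i

theorem NoAlgOn.eq_of_finite_orbit {G : Set (Perm Ω)} {B : Set (Set (Fin n → Ω))}
    (hB : NoAlgOn G B) {c d : Set (Fin n → Ω)} (hc : c ∈ B) (hd : d ∈ B)
    (h : {e | ∃ g ∈ G, g • d = d ∧ e = g • c}.Finite) : c = d := by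
  refine hB.mem_of_finite_orbit (Set.finite_singleton d) (Set.singleton_subset_iff.2 hd) hc
    (h.subset ?_)
  rintro _ ⟨g, hg, hgd, rfl⟩
  exact ⟨g, hg, hgd d rfl, rfl⟩

theorem DenseClasses.exists_finite_pins {G : Set (Perm Ω)} {B : Set (Set (Fin n → Ω))}
    (hB : DenseClasses G B) (x : Ω) : ∃ S, S.Finite ∧ S ⊆ B ∧ Pins G S x := by
  obtain ⟨k, cc, hccB, hpin⟩ := hB x
  exact ⟨Set.range cc, Set.finite_range cc, Set.range_subset_iff.2 hccB,
    fun g hg hgS => hpin g hg fun i => hgS _ (Set.mem_range_self i)⟩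

theorem Entangles.algebraicOver {G : Set (Perm Ω)} {x : Ω} {d : Set (Fin n → Ω)}
    (h : Entangles x d) {w : Fin n → Ω} (hw : w ∈ d) : AlgebraicOver G x d := by
  refine (Set.finite_range w).subset ?_
  rintro _ ⟨g, hg, hgd, rfl⟩
  obtain ⟨v, hv, rfl⟩ : w ∈ g • d := by rwa [← sAct_eq_smul, hgd]
  obtain ⟨i, hi⟩ := h v hv
  exact ⟨i, by rw [← hi]; rfl⟩

/-- The `G_d`-orbit of `c` is covered by translates of the `G_x`-orbit of `c`, one for each point
of the finite `G_d`-orbit of `x`. -/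
theorem finite_orbit_of_algebraicOver (G : Subgroup (Perm Ω)) {x : Ω} {c d : Set (Fin n → Ω)}
    (hx : AlgebraicOver G x d) (hc : {e | ∃ g ∈ G, g x = x ∧ e = g • c}.Finite) :
    {e | ∃ g ∈ G, g • d = d ∧ e = g • c}.Finite := by
  have hrep : ∀ y ∈ {b | ∃ g ∈ G, sAct g d = d ∧ b = g x}, ∃ γ ∈ G, γ x = y := by
    rintro _ ⟨g, hg, -, rfl⟩
    exact ⟨g, hg, rfl⟩
  choose! γ hγG hγx using hrep
  refine (hx.image2 (fun y e => γ y • e) hc).subset ?_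
  rintro _ ⟨g, hg, hgd, rfl⟩
  have hy : g x ∈ {b | ∃ g ∈ G, sAct g d = d ∧ b = g x} := ⟨g, hg, hgd, rfl⟩
  refine ⟨g x, hy, (γ (g x))⁻¹ • g • c, ⟨(γ (g x))⁻¹ * g, mul_mem (inv_mem (hγG _ hy)) hg, ?_,
    (mul_smul _ _ _).symm⟩, smul_inv_smul _ _⟩
  rw [Perm.mul_apply, Perm.inv_eq_iff_eq, hγx _ hy]

end

section

variable {Ω : Type*} {n : ℕ} (G : Subgroup (Perm Ω)) {B : Set (Set (Fin n → Ω))}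

theorem smul_eq_self_of_smul_eq (hBinv : ∀ g ∈ G, ∀ d ∈ B, g • d ∈ B)
    (hBdisj : B.PairwiseDisjoint id) {g : Perm Ω} (hg : g ∈ G) {d : Set (Fin n → Ω)} (hd : d ∈ B)
    {v : Fin n → Ω} (hv : v ∈ d) (hgv : g • v = v) : g • d = d :=
  hBdisj.elim (hBinv g hg d hd) hd <|
    Set.not_disjoint_iff.2 ⟨v, hgv ▸ Set.smul_mem_smul_set hv, hv⟩

theorem exists_forall_pins_imp_mem (hB : NoAlgOn G B)
    (hfix : ∀ g ∈ G, ∀ d ∈ B, ∀ v ∈ d, g • v = v → g • d = d)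
    {c : Set (Fin n → Ω)} (hc : c ∈ B) {u : Fin n → Ω} (hu : u ∈ c) :
    ∃ x, ∀ S, S.Finite → S ⊆ B → Pins G S x → c ∈ S := by
  by_contra! h
  choose S hSfin hSB hSpin hcS using h
  have hcmem : c ∈ ⋃ i, S (u i) := by
    refine hB.mem_of_finite_orbit (Set.finite_iUnion fun i => hSfin _)
      (Set.iUnion_subset fun i => hSB _) hc ((Set.finite_singleton c).subset ?_)
    rintro _ ⟨g, hg, hgS, rfl⟩
    have hgu : g • u = u :=
      funext fun i => hSpin (u i) g hg fun f hf => hgS f (Set.mem_iUnion.2 ⟨i, hf⟩)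
    exact hfix g hg c hc u hu hgu
  obtain ⟨i, hi⟩ := Set.mem_iUnion.1 hcmem
  exact hcS _ hi

theorem orbit_subset_of_forall_pins_imp_mem (hBinv : ∀ g ∈ G, ∀ d ∈ B, g • d ∈ B)
    {c : Set (Fin n → Ω)} {x : Ω} (hx : ∀ S, S.Finite → S ⊆ B → Pins G S x → c ∈ S)
    {S₀ : Set (Set (Fin n → Ω))} (hS₀ : S₀.Finite) (hS₀B : S₀ ⊆ B) (hpin : Pins G S₀ x) :
    {e | ∃ g ∈ G, g x = x ∧ e = g • c} ⊆ S₀ := by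
  rintro _ ⟨h, hh, hhx, rfl⟩
  have hinvx : h⁻¹ x = x := by rw [Perm.inv_eq_iff_eq, hhx]
  have hc := hx (h⁻¹ • S₀) hS₀.smul_set (by
      rintro _ ⟨f, hf, rfl⟩
      exact hBinv _ (inv_mem hh) f (hS₀B hf))
    (hinvx ▸ hpin.smul (inv_mem hh))
  rwa [Set.mem_smul_set_iff_inv_smul_mem, inv_inv] at hc

theorem exists_entangles_of_pins (hG : NoAlg (G : Set (Perm Ω)))
    (hfix : ∀ g ∈ G, ∀ d ∈ B, ∀ v ∈ d, g • v = v → g • d = d)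
    {S : Set (Set (Fin n → Ω))} (hS : S.Finite) (hSB : S ⊆ B) {x : Ω} (hpin : Pins G S x) :
    ∃ f ∈ S, Entangles x f := by
  by_contra! h
  have havoid : ∀ f ∈ S, ∃ w ∈ f, x ∉ Set.range w := fun f hf => by
    simpa [Entangles] using h f hf
  have : Nonempty Ω := ⟨x⟩
  choose! w hwf hwx using havoid
  have hxA : x ∈ (⋃ f ∈ S, Set.range (w f) : Set Ω) := by
    refine hG.mem_of_finite_orbit (hS.biUnion fun f _ => Set.finite_range _)
      ((Set.finite_singleton x).subset ?_)
    rintro _ ⟨g, hg, hgA, rfl⟩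
    exact hpin g hg fun f hf => hfix g hg f (hSB hf) (w f) (hwf f hf)
      (funext fun i => hgA _ (Set.mem_biUnion hf ⟨i, rfl⟩))
  obtain ⟨f, hf, hxf⟩ := Set.mem_iUnion₂.1 hxA
  exact hwx f hf hxf

theorem exists_stronglyEntangles (hG : NoAlg (G : Set (Perm Ω))) (hdense : DenseClasses G B)
    (hBnoalg : NoAlgOn G B) (hBinv : ∀ g ∈ G, ∀ d ∈ B, g • d ∈ B)
    (hBdisj : B.PairwiseDisjoint id) (hBne : ∀ d ∈ B, d.Nonempty)
    {c : Set (Fin n → Ω)} (hc : c ∈ B) : ∃ a, StronglyEntangles B a c := by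
  have hfix : ∀ g ∈ G, ∀ d ∈ B, ∀ v ∈ d, g • v = v → g • d = d := fun _ hg _ hd _ hv =>
    smul_eq_self_of_smul_eq G hBinv hBdisj hg hd hv
  obtain ⟨u, hu⟩ := hBne c hc
  obtain ⟨x, hx⟩ := exists_forall_pins_imp_mem G hBnoalg hfix hc hu
  obtain ⟨S₀, hS₀, hS₀B, hpin⟩ := hdense.exists_finite_pins x
  have hcx : {e | ∃ g ∈ G, g x = x ∧ e = g • c}.Finite :=
    hS₀.subset (orbit_subset_of_forall_pins_imp_mem G hBinv hx hS₀ hS₀B hpin)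
  have huniq : ∀ d ∈ B, Entangles x d → d = c := fun d hd hxd => by
    obtain ⟨w, hw⟩ := hBne d hd
    exact (hBnoalg.eq_of_finite_orbit hc hd
      (finite_orbit_of_algebraicOver G (hxd.algebraicOver hw) hcx)).symm
  obtain ⟨f, hf, hxf⟩ := exists_entangles_of_pins G hG hfix hS₀ hS₀B hpin
  obtain rfl := huniq f (hS₀B hf) hxf
  exact ⟨x, hxf, huniq⟩

end

section

variable {Ω : Type*} {n : ℕ} {U : Set (Fin n → Ω)} {r : (Fin n → Ω) → (Fin n → Ω) → Prop}

theorem nonempty_of_mem_classes (hrefl : ∀ u ∈ U, r u u) {d : Set (Fin n → Ω)}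
    (hd : d ∈ classes U r) : d.Nonempty := by
  obtain ⟨u, hu, rfl⟩ := hd
  exact ⟨u, hu, hrefl u hu⟩

theorem cls_eq_of_mem (hsymm : ∀ u ∈ U, ∀ v ∈ U, r u v → r v u)
    (htrans : ∀ u ∈ U, ∀ v ∈ U, ∀ w ∈ U, r u v → r v w → r u w)
    {u v : Fin n → Ω} (hu : u ∈ U) (hv : v ∈ cls U r u) : cls U r v = cls U r u := by
  ext w
  exact ⟨fun ⟨hw, hvw⟩ => ⟨hw, htrans u hu v hv.1 w hw hv.2 hvw⟩,
    fun ⟨hw, huw⟩ => ⟨hw, htrans v hv.1 u hu w hw (hsymm u hu v hv.1 hv.2) huw⟩⟩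

theorem classes_pairwiseDisjoint (hsymm : ∀ u ∈ U, ∀ v ∈ U, r u v → r v u)
    (htrans : ∀ u ∈ U, ∀ v ∈ U, ∀ w ∈ U, r u v → r v w → r u w) :
    (classes U r).PairwiseDisjoint id := by
  rintro _ ⟨u, hu, rfl⟩ _ ⟨v, hv, rfl⟩ hne
  exact Set.disjoint_left.2 fun w hwu hwv =>
    hne ((cls_eq_of_mem hsymm htrans hu hwu).symm.trans (cls_eq_of_mem hsymm htrans hv hwv))

theorem smul_cls (G : Subgroup (Perm Ω)) (hUinv : ∀ g ∈ G, ∀ u ∈ U, tAct g u ∈ U)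
    (hrinv : ∀ g ∈ G, ∀ u ∈ U, ∀ v ∈ U, r u v → r (tAct g u) (tAct g v))
    {g : Perm Ω} (hg : g ∈ G) {u : Fin n → Ω} (hu : u ∈ U) :
    g • cls U r u = cls U r (g • u) := by
  ext w
  constructor
  · rintro ⟨v, ⟨hv, huv⟩, rfl⟩
    exact ⟨hUinv g hg v hv, hrinv g hg u hu v hv huv⟩
  · rintro ⟨hw, huw⟩
    refine Set.mem_smul_set_iff_inv_smul_mem.2 ⟨hUinv _ (inv_mem hg) w hw, ?_⟩
    simpa [tAct_eq_smul] using hrinv _ (inv_mem hg) _ (hUinv g hg u hu) w hw huw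

theorem smul_mem_classes (G : Subgroup (Perm Ω)) (hUinv : ∀ g ∈ G, ∀ u ∈ U, tAct g u ∈ U)
    (hrinv : ∀ g ∈ G, ∀ u ∈ U, ∀ v ∈ U, r u v → r (tAct g u) (tAct g v))
    {g : Perm Ω} (hg : g ∈ G) {d : Set (Fin n → Ω)} (hd : d ∈ classes U r) :
    g • d ∈ classes U r := by
  obtain ⟨u, hu, rfl⟩ := hd
  exact ⟨g • u, hUinv g hg u hu, smul_cls G hUinv hrinv hg hu⟩

end

theorem every_class_strongly_entangled_general
    {Ω : Type}
    (G : Subgroup (Equiv.Perm Ω))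
    (hGnoalg : NoAlg (G : Set (Equiv.Perm Ω)))
    {n : ℕ} (U : Set (Fin n → Ω))
    (hUinv : ∀ g ∈ G, ∀ u ∈ U, tAct g u ∈ U)
    (r : (Fin n → Ω) → (Fin n → Ω) → Prop)
    (hrefl : ∀ u ∈ U, r u u)
    (hsymm : ∀ u ∈ U, ∀ v ∈ U, r u v → r v u)
    (htrans : ∀ u ∈ U, ∀ v ∈ U, ∀ w ∈ U, r u v → r v w → r u w)
    (hrinv : ∀ g ∈ G, ∀ u ∈ U, ∀ v ∈ U, r u v → r (tAct g u) (tAct g v))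
    (hdense : DenseClasses (G : Set (Equiv.Perm Ω)) (classes U r))
    (hBnoalg : NoAlgOn (G : Set (Equiv.Perm Ω)) (classes U r)) :
    ∀ c ∈ classes U r, ∃ a : Ω, StronglyEntangles (classes U r) a c :=
  fun _ hc => exists_stronglyEntangles G hGnoalg hdense hBnoalg
    (fun _ hg _ hd => smul_mem_classes G hUinv hrinv hg hd)
    (classes_pairwiseDisjoint hsymm htrans) (fun _ hd => nonempty_of_mem_classes hrefl hd) hc

theorem every_class_strongly_entangled
    {Ω : Type} [Countable Ω] [Infinite Ω]
    (G : Subgroup (Equiv.Perm Ω))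
    (hGclosed : TopClosedPerm (G : Set (Equiv.Perm Ω)))
    (hGoligo : Oligo (G : Set (Equiv.Perm Ω)))
    (hGnoalg : NoAlg (G : Set (Equiv.Perm Ω)))
    {n : ℕ} (U : Set (Fin n → Ω))
    (hUinv : ∀ g ∈ G, ∀ u ∈ U, tAct g u ∈ U)
    (r : (Fin n → Ω) → (Fin n → Ω) → Prop)
    (hrefl : ∀ u ∈ U, r u u)
    (hsymm : ∀ u ∈ U, ∀ v ∈ U, r u v → r v u)
    (htrans : ∀ u ∈ U, ∀ v ∈ U, ∀ w ∈ U, r u v → r v w → r u w)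
    (hrinv : ∀ g ∈ G, ∀ u ∈ U, ∀ v ∈ U, r u v → r (tAct g u) (tAct g v))
    (hdense : DenseClasses (G : Set (Equiv.Perm Ω)) (classes U r))
    (hBnoalg : NoAlgOn (G : Set (Equiv.Perm Ω)) (classes U r)) :
    ∀ c ∈ classes U r, ∃ a : Ω, StronglyEntangles (classes U r) a c :=
  every_class_strongly_entangled_general G hGnoalg U hUinv r hrefl hsymm htrans hrinv hdense hBnoalg
end

section
/- Let G be a topologically closed oligomorphic permutation group on a countably infinite set Ω acting without algebraicity, let U ⊆ Ω^n be G-invariant, let ∼ be a G-invariant equivalence relation on U, let B := U/∼ be dense, and assume the induced action of G on B is without algebraicity. If a ∈ Ω entangles c ∈ B and a′ ∈ Ω strongly entangles c, then a = a′. -/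
theorem entangler_eq_strong_entangler
    {Ω : Type} [Countable Ω] [Infinite Ω]
    (G : Subgroup (Equiv.Perm Ω))
    (hGclosed : TopClosedPerm (G : Set (Equiv.Perm Ω)))
    (hGoligo : Oligo (G : Set (Equiv.Perm Ω)))
    (hGnoalg : NoAlg (G : Set (Equiv.Perm Ω)))
    {n : ℕ} (U : Set (Fin n → Ω))
    (hUinv : ∀ g ∈ G, ∀ u ∈ U, tAct g u ∈ U)
    (r : (Fin n → Ω) → (Fin n → Ω) → Prop)
    (hrefl : ∀ u ∈ U, r u u)
    (hsymm : ∀ u ∈ U, ∀ v ∈ U, r u v → r v u)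
    (htrans : ∀ u ∈ U, ∀ v ∈ U, ∀ w ∈ U, r u v → r v w → r u w)
    (hrinv : ∀ g ∈ G, ∀ u ∈ U, ∀ v ∈ U, r u v → r (tAct g u) (tAct g v))
    (hdense : DenseClasses (G : Set (Equiv.Perm Ω)) (classes U r))
    (hBnoalg : NoAlgOn (G : Set (Equiv.Perm Ω)) (classes U r)) :
    ∀ (a a' : Ω), ∀ c ∈ classes U r,
      Entangles a c → StronglyEntangles (classes U r) a' c → a = a' := by
  intro a a' c hc hEnt hStrong
  obtain ⟨u, hu, rfl⟩ := hc
  have huc : u ∈ cls U r u := ⟨hu, hrefl u hu⟩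
  have key : ∀ g : Equiv.Perm Ω, g ∈ (G : Set (Equiv.Perm Ω)) →
      sAct g (cls U r u) = cls U r (tAct g u) := by
    intro g hg
    ext v
    constructor
    · rintro ⟨w, ⟨hwU, hrw⟩, rfl⟩
      exact ⟨hUinv g hg w hwU, hrinv g hg u hu w hwU hrw⟩
    · rintro ⟨hvU, hrv⟩
      refine ⟨tAct g⁻¹ v, ⟨hUinv g⁻¹ (G.inv_mem hg) v hvU, ?_⟩, ?_⟩
      · have h2 := hrinv g⁻¹ (G.inv_mem hg) (tAct g u) (hUinv g hg u hu) v hvU hrv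
        have hgu : tAct g⁻¹ (tAct g u) = u := by
          funext i; simp [tAct]
        rwa [hgu] at h2
      · funext i; simp [tAct]
  have hfin : Set.Finite {b : Ω | ∃ g ∈ (G : Set (Equiv.Perm Ω)),
      (∀ i : Fin 1, g ((fun _ : Fin 1 => a') i) = (fun _ : Fin 1 => a') i) ∧ b = g a} := by
    apply Set.Finite.subset (Set.finite_range u)
    rintro b ⟨g, hg, hfix, rfl⟩
    have hga' : g a' = a' := hfix 0
    have hmem : sAct g (cls U r u) ∈ classes U r :=
      ⟨tAct g u, hUinv g hg u hu, key g hg⟩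
    have hent' : Entangles a' (sAct g (cls U r u)) := by
      rintro v ⟨w, hw, rfl⟩
      obtain ⟨i, hi⟩ := hStrong.1 w hw
      exact ⟨i, by simp [tAct, hi, hga']⟩
    have heq : sAct g (cls U r u) = cls U r u := hStrong.2 _ hmem hent'
    have hucg : u ∈ sAct g (cls U r u) := heq.symm ▸ huc
    obtain ⟨w, hw, hwu⟩ := hucg
    obtain ⟨i, hi⟩ := hEnt w hw
    exact ⟨i, by rw [← hwu]; simp [tAct, hi]⟩
  obtain ⟨i, hi⟩ := hGnoalg 1 (fun _ => a') a hfin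
  exact hi
end

section
/- Let A and B be relational structures with countably infinite domains Ω and Ω′ whose automorphism groups Aut(A) and Aut(B) are oligomorphic (i.e., A and B are ω-categorical) and act without algebraicity. Then every topological group isomorphism φ: Aut(A) → Aut(B) (a group isomorphism that is a homeomorphism with respect to the topologies of pointwise convergence) is an isomorphism of permutation group actions: there exists a bijection θ: Ω → Ω′ such that φ(g) = θ∘g∘θ⁻¹ for all g ∈ Aut(A). -/
/-!
Let `Aut(A)` act on `Ω` directly and on `Ω'` through `φ`. Both actions are without algebraicity,
and continuity of `φ` and `φ⁻¹` says that the stabiliser of a point of either set contains the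
pointwise stabiliser of a finite subset of the other. Call `x ∈ Ω` and `y ∈ Ω'` interalgebraic
if each has a finite orbit under the stabiliser of the other. Finite orbits compose (`G_y • x` and
`G_x • y'` finite give `G_y • y'` finite), so without algebraicity a point has at most one
interalgebraic partner. One exists: if `T` is a finite support of `x`, some `y ∈ T` has `x` in
every finite support of `y`, which traps `G_y • x` in such a support; doing the same from `y`
returns to `x`. Interalgebraicity is invariant under the group, so it is the graph of an
equivariant bijection.
-/

open MulAction Topology Function Pointwise

section NoAlgebraicity

variable (G X Y : Type*) [Group G] [MulAction G X] [MulAction G Y]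

def HasNoAlgebraicity : Prop :=
  ∀ s : Set X, s.Finite → ∀ x : X, (orbit (fixingSubgroup G s) x).Finite → x ∈ s

/-- Topologically: the stabilisers of points of `Y` are open for the topology of pointwise
convergence on `X`. -/
def HasFiniteSupports : Prop :=
  ∀ y : Y, ∃ s : Set X, s.Finite ∧ fixingSubgroup G s ≤ stabilizer G y

variable {G X Y}

theorem fixingSubgroup_singleton (x : X) :
    fixingSubgroup G ({x} : Set X) = stabilizer G x := by
  ext g
  simp [mem_fixingSubgroup_iff]

theorem HasNoAlgebraicity.eq_of_finite_orbit_stabilizer (hX : HasNoAlgebraicity G X)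
    {x x' : X} (hfin : (orbit (stabilizer G x) x').Finite) : x' = x := by
  simpa using hX {x} (Set.finite_singleton x) x' (by rwa [fixingSubgroup_singleton])

theorem finite_orbit_of_finite_orbit_stabilizer {H : Subgroup G} {x : X} {y : Y}
    (hy : (orbit H y).Finite) (hx : (orbit (stabilizer G y) x).Finite) :
    (orbit H x).Finite := by
  choose! r hr using fun z (hz : z ∈ orbit H y) => hz
  refine (hy.biUnion fun z _ => hx.image ((r z : G) • ·)).subset ?_
  rintro _ ⟨h, rfl⟩
  have hstab : (r (h • y) : G)⁻¹ * h ∈ stabilizer G y := by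
    rw [mem_stabilizer_iff, mul_smul, inv_smul_eq_iff]
    exact (hr _ (mem_orbit y h)).symm
  refine Set.mem_biUnion (mem_orbit y h) ⟨_, mem_orbit x ⟨_, hstab⟩, ?_⟩
  simp [smul_smul, Subgroup.smul_def]

theorem finite_orbit_stabilizer_smul {x : X} {y : Y} (g : G)
    (h : (orbit (stabilizer G y) x).Finite) :
    (orbit (stabilizer G (g • y)) (g • x)).Finite := by
  refine (h.image (g • ·)).subset ?_
  rintro _ ⟨⟨k, hk⟩, rfl⟩
  rw [stabilizer_smul_eq_stabilizer_map_conj] at hk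
  obtain ⟨k', hk', rfl⟩ := hk
  exact ⟨k' • x, mem_orbit x (⟨k', hk'⟩ : stabilizer G y), by simp [MulAut.conj_apply, smul_smul]⟩

theorem fixingSubgroup_smul_le_stabilizer_smul {s : Set X} {y : Y}
    (h : fixingSubgroup G s ≤ stabilizer G y) (g : G) :
    fixingSubgroup G (g • s) ≤ stabilizer G (g • y) := by
  rw [SubMulAction.fixingSubgroup_smul_eq_fixingSubgroup_map_conj,
    stabilizer_smul_eq_stabilizer_map_conj]
  exact Subgroup.map_mono h

theorem orbit_stabilizer_subset_of_forall_support_mem {x : X} {y : Y} {s₀ : Set X}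
    (hs₀ : s₀.Finite) (hs₀y : fixingSubgroup G s₀ ≤ stabilizer G y)
    (hx : ∀ s : Set X, s.Finite → fixingSubgroup G s ≤ stabilizer G y → x ∈ s) :
    orbit (stabilizer G y) x ⊆ s₀ := by
  rintro _ ⟨⟨k, hk⟩, rfl⟩
  have hky : k⁻¹ • y = y := inv_smul_eq_iff.mpr hk.symm
  have hmem : x ∈ k⁻¹ • s₀ :=
    hx _ hs₀.smul_set (hky ▸ fixingSubgroup_smul_le_stabilizer_smul hs₀y k⁻¹)
  simpa using Set.mem_smul_set_iff_inv_smul_mem.mp hmem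

/-- If `x` were outside some finite support of every `y ∈ t`, the union of these supports
would be a finite set whose pointwise stabiliser fixes `x`. -/
theorem HasNoAlgebraicity.exists_mem_forall_support_mem (hX : HasNoAlgebraicity G X)
    {x : X} {t : Set Y} (ht : t.Finite) (hxt : fixingSubgroup G t ≤ stabilizer G x) :
    ∃ y ∈ t, ∀ s : Set X, s.Finite → fixingSubgroup G s ≤ stabilizer G y → x ∈ s := by
  by_contra! hcon
  choose! s hsfin hsy hxs using hcon
  have hfix : fixingSubgroup G (⋃ y ∈ t, s y) ≤ stabilizer G x := fun g hg =>
    hxt <| (mem_fixingSubgroup_iff G).mpr fun y hy =>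
      hsy y hy <| (mem_fixingSubgroup_iff G).mpr fun z hz =>
        (mem_fixingSubgroup_iff G).mp hg z (Set.mem_biUnion hy hz)
  have horbit : orbit (fixingSubgroup G (⋃ y ∈ t, s y)) x ⊆ {x} := by
    rintro _ ⟨⟨g, hg⟩, rfl⟩
    exact hfix hg
  obtain ⟨y, hy, hxy⟩ := Set.mem_iUnion₂.mp <|
    hX _ (ht.biUnion hsfin) x ((Set.finite_singleton x).subset horbit)
  exact hxs y hy hxy

theorem exists_finite_orbit_stabilizer (hX : HasNoAlgebraicity G X)
    (hXY : HasFiniteSupports G X Y) (hYX : HasFiniteSupports G Y X) (x : X) :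
    ∃ y : Y, (orbit (stabilizer G y) x).Finite := by
  obtain ⟨t, ht, hxt⟩ := hYX x
  obtain ⟨y, -, hy⟩ := hX.exists_mem_forall_support_mem ht hxt
  obtain ⟨s, hs, hsy⟩ := hXY y
  exact ⟨y, hs.subset (orbit_stabilizer_subset_of_forall_support_mem hs hsy hy)⟩

variable (G) in
def Interalgebraic (x : X) (y : Y) : Prop :=
  (orbit (stabilizer G y) x).Finite ∧ (orbit (stabilizer G x) y).Finite

theorem Interalgebraic.symm {x : X} {y : Y} (h : Interalgebraic G x y) :
    Interalgebraic G y x :=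
  And.symm h

theorem Interalgebraic.smul {x : X} {y : Y} (h : Interalgebraic G x y) (g : G) :
    Interalgebraic G (g • x) (g • y) :=
  ⟨finite_orbit_stabilizer_smul g h.1, finite_orbit_stabilizer_smul g h.2⟩

theorem Interalgebraic.unique_right (hY : HasNoAlgebraicity G Y) {x : X} {y y' : Y}
    (h : Interalgebraic G x y) (h' : Interalgebraic G x y') : y' = y :=
  hY.eq_of_finite_orbit_stabilizer (finite_orbit_of_finite_orbit_stabilizer h.1 h'.2)

theorem exists_interalgebraic (hX : HasNoAlgebraicity G X) (hY : HasNoAlgebraicity G Y)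
    (hXY : HasFiniteSupports G X Y) (hYX : HasFiniteSupports G Y X) (x : X) :
    ∃ y : Y, Interalgebraic G x y := by
  obtain ⟨y, hy⟩ := exists_finite_orbit_stabilizer hX hXY hYX x
  obtain ⟨x', hx'⟩ := exists_finite_orbit_stabilizer hY hYX hXY y
  obtain rfl : x = x' :=
    hX.eq_of_finite_orbit_stabilizer (finite_orbit_of_finite_orbit_stabilizer hx' hy)
  exact ⟨y, hy, hx'⟩

theorem exists_equiv_smul_of_hasNoAlgebraicity (hX : HasNoAlgebraicity G X)
    (hY : HasNoAlgebraicity G Y) (hXY : HasFiniteSupports G X Y)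
    (hYX : HasFiniteSupports G Y X) :
    ∃ θ : X ≃ Y, ∀ (g : G) (x : X), θ (g • x) = g • θ x := by
  choose θ hθ using exists_interalgebraic hX hY hXY hYX
  have hinj : Injective θ := fun x x' hxx' =>
    ((hθ x).symm.unique_right hX (hxx' ▸ (hθ x').symm)).symm
  have hsurj : Surjective θ := fun y =>
    have ⟨x, hx⟩ := exists_interalgebraic hY hX hYX hXY y
    ⟨x, ((hθ x).unique_right hY hx.symm).symm⟩
  exact ⟨Equiv.ofBijective θ ⟨hinj, hsurj⟩, fun g x => ((hθ x).smul g).unique_right hY (hθ _)⟩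

theorem HasNoAlgebraicity.of_surjective {H : Type*} [Group H] [MulAction H X] (f : G →* H)
    (hf : Surjective f) (hsmul : ∀ (g : G) (x : X), f g • x = g • x)
    (h : HasNoAlgebraicity H X) : HasNoAlgebraicity G X := by
  intro s hs x hx
  refine h s hs x (hx.subset ?_)
  rintro _ ⟨⟨k, hk⟩, rfl⟩
  obtain ⟨g, rfl⟩ := hf k
  refine ⟨⟨g, (mem_fixingSubgroup_iff G).mpr fun z hz => ?_⟩, (hsmul g x).symm⟩
  rw [← hsmul]
  exact (mem_fixingSubgroup_iff H).mp hk z hz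

end NoAlgebraicity

theorem NoAlg.hasNoAlgebraicity {α : Type*} {K : Subgroup (Equiv.Perm α)}
    (h : NoAlg (K : Set (Equiv.Perm α))) : HasNoAlgebraicity K α := by
  intro s hs a ha
  obtain ⟨n, f, rfl⟩ := hs.fin_embedding
  have hsub : {b | ∃ g ∈ (K : Set (Equiv.Perm α)), (∀ i, g (f i) = f i) ∧ b = g a} ⊆
      orbit (fixingSubgroup K (Set.range f)) a := by
    rintro _ ⟨g, hg, hfix, rfl⟩
    refine ⟨⟨⟨g, hg⟩, (mem_fixingSubgroup_iff K).mpr ?_⟩, rfl⟩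
    rintro _ ⟨i, rfl⟩
    exact hfix i
  obtain ⟨i, rfl⟩ := h n f a (ha.subset hsub)
  exact Set.mem_range_self i

section PermTopology

variable {α β : Type*}

/-- `autTop L Ω` is `permTop (autGroup L Ω)` by definition. -/
abbrev permTop (K : Subgroup (Equiv.Perm α)) : TopologicalSpace K :=
  TopologicalSpace.induced (fun g : K => ⇑(g : Equiv.Perm α)) (FnTop α α)

theorem exists_finite_fixingSubgroup_subset_of_isOpen (K : Subgroup (Equiv.Perm α))
    {U : Set K} (hU : IsOpen[permTop K] U) (hU1 : 1 ∈ U) :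
    ∃ s : Set α, s.Finite ∧ (fixingSubgroup K s : Set K) ⊆ U := by
  let _ : TopologicalSpace α := ⊥
  have : DiscreteTopology α := ⟨rfl⟩
  obtain ⟨W, hW, rfl⟩ := isOpen_induced_iff.mp hU
  obtain ⟨I, u, hu, hIW⟩ := isOpen_pi_iff.mp hW _ hU1
  refine ⟨I, I.finite_toSet, fun g hg => hIW fun a ha => ?_⟩
  have hga : (g : Equiv.Perm α) a = a := (mem_fixingSubgroup_iff K).mp hg a ha
  simpa [hga] using (hu a ha).2

theorem isOpen_stabilizer (K : Subgroup (Equiv.Perm α)) (a : α) :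
    IsOpen[permTop K] (stabilizer K a : Set K) := by
  let _ : TopologicalSpace α := ⊥
  have : DiscreteTopology α := ⟨rfl⟩
  have hfix : IsOpen {f : α → α | f a = a} :=
    (continuous_apply (A := fun _ : α => α) a).isOpen_preimage {a} (isOpen_discrete _)
  exact isOpen_induced hfix

theorem exists_finite_fixingSubgroup_le_comap_stabilizer {K : Subgroup (Equiv.Perm α)}
    {K' : Subgroup (Equiv.Perm β)} (f : K →* K') (hf : Continuous[permTop K, permTop K'] f)
    (b : β) : ∃ s : Set α, s.Finite ∧ fixingSubgroup K s ≤ (stabilizer K' b).comap f := by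
  let _ := permTop K
  let _ := permTop K'
  exact exists_finite_fixingSubgroup_subset_of_isOpen K
    ((isOpen_stabilizer K' b).preimage hf) (by simp)

end PermTopology

theorem topological_group_iso_is_action_iso_general
    {Ω Ω' : Type}
    (L L' : FirstOrder.Language)
    [L.Structure Ω] [L'.Structure Ω']
    (hAnoalg : NoAlg (autGroup L Ω : Set (Equiv.Perm Ω)))
    (hBnoalg : NoAlg (autGroup L' Ω' : Set (Equiv.Perm Ω')))
    (φ : autGroup L Ω ≃* autGroup L' Ω')
    (hφcont : @Continuous _ _ (autTop L Ω) (autTop L' Ω') ⇑φ)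
    (hφsymmcont : @Continuous _ _ (autTop L' Ω') (autTop L Ω) ⇑φ.symm) :
    ∃ θ : Ω ≃ Ω', ∀ (g : autGroup L Ω) (x : Ω'),
      (φ g : Equiv.Perm Ω') x = θ ((g : Equiv.Perm Ω) (θ.symm x)) := by
  let _ : MulAction (autGroup L Ω) Ω' := MulAction.compHom Ω' φ.toMonoidHom
  have hNA : HasNoAlgebraicity (autGroup L Ω) Ω := hAnoalg.hasNoAlgebraicity
  have hNA' : HasNoAlgebraicity (autGroup L Ω) Ω' :=
    hBnoalg.hasNoAlgebraicity.of_surjective φ.toMonoidHom φ.surjective fun _ _ => rfl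
  have hsupp : HasFiniteSupports (autGroup L Ω) Ω Ω' :=
    exists_finite_fixingSubgroup_le_comap_stabilizer φ.toMonoidHom hφcont
  have hsupp' : HasFiniteSupports (autGroup L Ω) Ω' Ω := by
    intro x
    obtain ⟨t, ht, hfix⟩ :=
      exists_finite_fixingSubgroup_le_comap_stabilizer φ.symm.toMonoidHom hφsymmcont x
    exact ⟨t, ht, fun g hg => by simpa using hfix (show φ g ∈ fixingSubgroup _ t from hg)⟩
  obtain ⟨θ, hθ⟩ := exists_equiv_smul_of_hasNoAlgebraicity hNA hNA' hsupp hsupp'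
  refine ⟨θ, fun g y => ?_⟩
  have hy := hθ g (θ.symm y)
  rw [θ.apply_symm_apply] at hy
  exact hy.symm

/-- Every topological group isomorphism between the automorphism groups of
ω-categorical structures without algebraicity is induced by a bijection of
the domains, i.e. is an isomorphism of permutation group actions. -/
theorem topological_group_iso_is_action_iso
    {Ω Ω' : Type} [Countable Ω] [Infinite Ω] [Countable Ω'] [Infinite Ω']
    (L L' : FirstOrder.Language) [L.IsRelational] [L'.IsRelational]
    [L.Structure Ω] [L'.Structure Ω']
    (hAoligo : Oligo (autGroup L Ω : Set (Equiv.Perm Ω)))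
    (hBoligo : Oligo (autGroup L' Ω' : Set (Equiv.Perm Ω')))
    (hAnoalg : NoAlg (autGroup L Ω : Set (Equiv.Perm Ω)))
    (hBnoalg : NoAlg (autGroup L' Ω' : Set (Equiv.Perm Ω')))
    (φ : autGroup L Ω ≃* autGroup L' Ω')
    (hφcont : @Continuous _ _ (autTop L Ω) (autTop L' Ω') ⇑φ)
    (hφsymmcont : @Continuous _ _ (autTop L' Ω') (autTop L Ω) ⇑φ.symm) :
    ∃ θ : Ω ≃ Ω', ∀ (g : autGroup L Ω) (x : Ω'),
      (φ g : Equiv.Perm Ω') x = θ ((g : Equiv.Perm Ω) (θ.symm x)) :=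
  topological_group_iso_is_action_iso_general L L' hAnoalg hBnoalg φ hφcont hφsymmcont
end
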